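/- arXiv:1905.13123 — 10 statements merged into one kernel-verified Lean document; each statement's English description precedes it below -/
import Mathlib

section
/- Let k ≥ 0 be an integer and let E = {F_{2i} + 1 : i ≥ 1} be the set of even-indexed Fibonacci numbers shifted by 1. Then the set φ^{2k+2} ∗ E = {φ^{2k+2}·a mod 1 : a ∈ E}, ordered as a subset of ℝ, has order type ω (i.e., it is an increasing sequence with no infinite decreasing subsequence, equivalently it is well-ordered with order type ω). -/
/-!
Write `n = k + 1`. Adding the defect `δ_i = ψ ^ 2n + ψ ^ 2 max(i,n) F_{2 min(i,n)}` to
`φ ^ 2n (F_{2i} + 1)` gives an integer: for `i ≤ n` the sum is `(φ ^ 2n + ψ ^ 2n)(F_{2i} + 1)`,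
and for `i ≥ n` it is `F_{2n+2i} + φ ^ 2n + ψ ^ 2n` because
`φ ^ 2n F_{2i} + ψ ^ 2i F_{2n} = F_{2n+2i}`. As `0 < δ_i < 1`,
the elements of the set are `1 - δ_i < 1 - ψ ^ 2n`, and they tend to `1 - ψ ^ 2n` since
`δ_i = ψ ^ 2n + ψ ^ 2i F_{2n}` for `i ≥ n`. The range of a sequence converging from below to a
limit it never reaches has order type `ω`.
-/

open Filter Topology Set
open Nat (fib)
open scoped goldenRatio

theorem nonempty_orderIso_nat_of_finite_Iio {α : Type*} [LinearOrder α] [Infinite α]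
    (h : ∀ x : α, (Iio x).Finite) : Nonempty (α ≃o ℕ) := by
  have hr : StrictMono fun x : α => (Iio x).ncard := fun a b hab =>
    ncard_lt_ncard (Iio_ssubset_Iio hab) (h b)
  have : Infinite (range fun x : α => (Iio x).ncard) :=
    infinite_coe_iff.2 (infinite_range_of_injective hr.injective)
  exact ⟨(hr.orderIso _).trans (Nat.Subtype.orderIsoOfNat _).symm⟩

theorem nonempty_range_orderIso_nat_of_tendsto {α : Type*} [LinearOrder α]
    [TopologicalSpace α] [OrderTopology α] {f : ℕ → α} {a : α} (hlt : ∀ n, f n < a)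
    (hf : Tendsto f atTop (𝓝 a)) : Nonempty (range f ≃o ℕ) := by
  have hinf : (range f).Infinite := fun hfin => by
    obtain ⟨n, hn⟩ : a ∈ range f := hfin.isClosed.closure_subset
      (mem_closure_of_tendsto hf (Eventually.of_forall mem_range_self))
    exact (hlt n).ne hn
  have : Infinite (range f) := hinf.to_subtype
  refine nonempty_orderIso_nat_of_finite_Iio fun ⟨_, n, rfl⟩ => ?_
  have hbelow : {m | f m < f n}.Finite := by
    have := hf.eventually (lt_mem_nhds (hlt n))
    rw [← Nat.cofinite_eq_atTop, eventually_cofinite] at this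
    exact this.subset fun m hm => not_lt.2 hm.le
  refine Finite.of_finite_image ((hbelow.image f).subset ?_) Subtype.val_injective.injOn
  rintro _ ⟨⟨_, m, rfl⟩, hm, rfl⟩
  exact ⟨m, hm, rfl⟩

namespace Real

theorem goldenRatio_pow_mul_fib_add_goldenConj_pow_mul_fib (m n : ℕ) :
    φ ^ m * fib n + ψ ^ n * fib m = fib (m + n) := by
  rw [coe_fib_eq, coe_fib_eq, coe_fib_eq]
  ring

theorem exists_int_goldenRatio_pow_add_goldenConj_pow (n : ℕ) :
    ∃ z : ℤ, φ ^ n + ψ ^ n = z := by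
  cases n with
  | zero => exact ⟨2, by norm_num⟩
  | succ n =>
    refine ⟨fib (n + 1) + 2 * fib n, ?_⟩
    rw [← goldenRatio_mul_fib_succ_add_fib, ← goldenConj_mul_fib_succ_add_fib]
    push_cast
    linear_combination (fib (n + 1) : ℝ) * goldenRatio_add_goldenConj

theorem goldenConj_sq_pos : 0 < ψ ^ 2 :=
  sq_pos_of_neg goldenConj_neg

theorem goldenConj_sq_lt_one : ψ ^ 2 < 1 := by
  rw [goldenConj_sq]
  linarith [goldenConj_neg]

theorem inv_sqrt_five_lt_neg_goldenConj : (√5)⁻¹ < -ψ := by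
  rw [← inv_goldenRatio]
  exact inv_strictAnti₀ goldenRatio_pos
    (goldenRatio_lt_two.trans ((lt_sqrt zero_le_two).2 (by norm_num)))

theorem goldenConj_pow_mul_fib_le {m M : ℕ} (h : m ≤ M) :
    ψ ^ (2 * M) * fib (2 * m) ≤ (√5)⁻¹ := by
  calc ψ ^ (2 * M) * fib (2 * m) ≤ ψ ^ (2 * m) * fib (2 * m) := by
        rw [pow_mul, pow_mul]
        exact mul_le_mul_of_nonneg_right
          (pow_le_pow_of_le_one goldenConj_sq_pos.le goldenConj_sq_lt_one.le h) (Nat.cast_nonneg _)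
    _ = (1 - ψ ^ (2 * m) * ψ ^ (2 * m)) / √5 := by
        rw [coe_fib_eq, mul_div_assoc', mul_sub, ← mul_pow, goldenConj_mul_goldenRatio, pow_mul,
          neg_one_sq, one_pow]
    _ ≤ (√5)⁻¹ := by
        rw [div_eq_mul_inv]
        exact mul_le_of_le_one_left (by positivity) (sub_le_self _ (mul_self_nonneg _))

theorem goldenConj_pow_mul_fib_pos (M : ℕ) {m : ℕ} (hm : 1 ≤ m) :
    0 < ψ ^ (2 * M) * fib (2 * m) :=
  mul_pos ((even_two_mul M).pow_pos goldenConj_ne_zero)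
    (by exact_mod_cast Nat.fib_pos.2 (by omega))

theorem fract_goldenRatio_pow_mul_fib_add_one {n i : ℕ} (hn : 1 ≤ n) (hi : 1 ≤ i) :
    Int.fract (φ ^ (2 * n) * (fib (2 * i) + 1))
      = 1 - ψ ^ (2 * n) - ψ ^ (2 * max i n) * fib (2 * min i n) := by
  have hψn : 0 < ψ ^ (2 * n) := (even_two_mul n).pow_pos goldenConj_ne_zero
  have hψn_le : ψ ^ (2 * n) ≤ ψ + 1 := by
    rw [pow_mul, ← goldenConj_sq]
    exact pow_le_of_le_one goldenConj_sq_pos.le goldenConj_sq_lt_one.le (by omega)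
  have hdefect_pos := goldenConj_pow_mul_fib_pos (max i n) (le_min hi hn)
  have hdefect_le := goldenConj_pow_mul_fib_le (min_le_max (a := i) (b := n))
  have hsqrt := inv_sqrt_five_lt_neg_goldenConj
  rw [Int.fract_eq_iff]
  refine ⟨by linarith, by linarith, ?_⟩
  obtain ⟨z, hz⟩ := exists_int_goldenRatio_pow_add_goldenConj_pow (2 * n)
  rcases le_total i n with h | h
  · rw [max_eq_right h, min_eq_left h]
    exact ⟨z * (fib (2 * i) + 1) - 1, by
      push_cast
      linear_combination (fib (2 * i) + 1 : ℝ) * hz⟩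
  · rw [max_eq_left h, min_eq_right h]
    exact ⟨fib (2 * n + 2 * i) + z - 1, by
      push_cast
      linear_combination goldenRatio_pow_mul_fib_add_goldenConj_pow_mul_fib (2 * n) (2 * i) + hz⟩

theorem fract_goldenRatio_pow_mul_fib_add_one_lt {n i : ℕ} (hn : 1 ≤ n) (hi : 1 ≤ i) :
    Int.fract (φ ^ (2 * n) * (fib (2 * i) + 1)) < 1 - ψ ^ (2 * n) := by
  rw [fract_goldenRatio_pow_mul_fib_add_one hn hi]
  linarith [goldenConj_pow_mul_fib_pos (max i n) (le_min hi hn)]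

theorem tendsto_fract_goldenRatio_pow_mul_fib_add_one {n : ℕ} (hn : 1 ≤ n) :
    Tendsto (fun i : ℕ => Int.fract (φ ^ (2 * n) * (fib (2 * i) + 1))) atTop
      (𝓝 (1 - ψ ^ (2 * n))) := by
  have hlim : Tendsto (fun i : ℕ => 1 - ψ ^ (2 * n) - (ψ ^ 2) ^ i * fib (2 * n)) atTop
      (𝓝 (1 - ψ ^ (2 * n))) := by
    simpa using tendsto_const_nhds.sub ((tendsto_pow_atTop_nhds_zero_of_lt_one
      goldenConj_sq_pos.le goldenConj_sq_lt_one).mul_const (fib (2 * n) : ℝ))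
  refine hlim.congr' ?_
  filter_upwards [eventually_ge_atTop n] with i hi
  rw [fract_goldenRatio_pow_mul_fib_add_one hn (hn.trans hi), max_eq_left hi, min_eq_right hi,
    ← pow_mul]

end Real

/-- For `k ≥ 0` and `E = {F_{2i} + 1 : i ≥ 1}`, the set
`φ^{2k+2} ∗ E = {φ^{2k+2}·a mod 1 : a ∈ E}` has order type `ω`,
i.e. it is order-isomorphic to `ℕ`. -/
theorem stmt_4 (k : ℕ) :
    Nonempty
      ((↥((fun a : ℕ => Int.fract (Real.goldenRatio ^ (2 * k + 2) * a)) ''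
          ((fun i : ℕ => Nat.fib (2 * i) + 1) '' {i | 1 ≤ i}))) ≃o ℕ) := by
  have hindex : {i : ℕ | 1 ≤ i} = range (· + 1) := Nat.range_succ.symm
  rw [show 2 * k + 2 = 2 * (k + 1) by ring, image_image, hindex, ← range_comp]
  refine nonempty_range_orderIso_nat_of_tendsto (a := 1 - ψ ^ (2 * (k + 1))) (fun j => ?_) ?_
  · push_cast
    exact Real.fract_goldenRatio_pow_mul_fib_add_one_lt le_add_self le_add_self
  · push_cast
    exact (Real.tendsto_fract_goldenRatio_pow_mul_fib_add_one le_add_self).comp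
      (tendsto_add_atTop_nat 1)
end

section
/- Let X ⊆ ℝ be a set that is well-ordered by the usual order on ℝ (every nonempty subset has a least element). Then the derived set Lim(X) (the set of limit points of X in ℝ) is also well-ordered by the usual order on ℝ. -/
/-- If `X ⊆ ℝ` is well-ordered by the usual order, then its derived set
(the set of limit points of `X`) is also well-ordered by the usual order. -/
theorem stmt_5 (X : Set ℝ) (hX : X.IsWF) :
    {z : ℝ | AccPt z (Filter.principal X)}.IsWF := by
  rw [Set.isWF_iff_no_descending_seq]
  intro f hf hmem
  -- radii
  set r : ℕ → ℝ := fun n => (f n - f (n + 1)) / 2 with hr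
  have hrpos : ∀ n, 0 < r n := fun n => by
    have := hf (Nat.lt_succ_self n)
    simp only [hr]; linarith
  set ρ : ℕ → ℝ := fun n => min (r n) (r (n - 1)) with hρ
  have hρpos : ∀ n, 0 < ρ n := fun n => lt_min (hrpos n) (hrpos (n - 1))
  -- pick points of X near each f n
  have hpick : ∀ n, ∃ x, x ∈ X ∧ |x - f n| < ρ n := by
    intro n
    have hacc := hmem n
    rw [Set.mem_setOf_eq, accPt_iff_nhds] at hacc
    obtain ⟨y, ⟨hy1, hy2⟩, _⟩ := hacc (Metric.ball (f n) (ρ n))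
      (Metric.ball_mem_nhds _ (hρpos n))
    exact ⟨y, hy2, by simpa [Real.dist_eq] using hy1⟩
  choose x hxX hxd using hpick
  have hanti : StrictAnti x := by
    apply strictAnti_nat_of_succ_lt
    intro n
    have h1 : |x n - f n| < r n := lt_of_lt_of_le (hxd n) (min_le_left _ _)
    have h2 : |x (n + 1) - f (n + 1)| < r n := by
      have := lt_of_lt_of_le (hxd (n + 1)) (min_le_right _ _)
      simpa using this
    rw [abs_lt] at h1 h2
    have : r n = (f n - f (n + 1)) / 2 := rfl
    linarith
  exact Set.isWF_iff_no_descending_seq.mp hX x hanti fun n => hxX n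
end

section
/- If X ⊆ ℝ is bounded and well-ordered by the usual order on ℝ, then the set X mod 1 := {x mod 1 : x ∈ X} (fractional parts) is also well-ordered by the usual order on ℝ. -/
lemma sub_image_isWF (s : Set ℝ) (c : ℝ) (h : s.IsWF) : ((· - c) '' s).IsWF := by
  rw [Set.isWF_iff_no_descending_seq] at h ⊢
  intro f hf hmem
  refine h (fun n => f n + c) (fun m n hmn => by simpa using hf hmn) fun n => ?_
  obtain ⟨x, hx, hxe⟩ := hmem n
  simpa [← hxe] using hx

/-- If `X ⊆ ℝ` is bounded and well-ordered by the usual order, then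
`X mod 1 = {fract x : x ∈ X}` is also well-ordered by the usual order. -/
theorem stmt_7 (X : Set ℝ) (hbdd : Bornology.IsBounded X) (hX : X.IsWF) :
    (Int.fract '' X).IsWF := by
  obtain ⟨N, hN⟩ := hbdd.subset_closedBall 0
  have hsub : Int.fract '' X ⊆
      (Finset.Icc (⌊-N⌋) (⌈N⌉)).sup fun m =>
        (· - (m : ℝ)) '' (X ∩ Int.floor ⁻¹' {m}) := by
    rintro _ ⟨x, hx, rfl⟩
    have hx' : |x| ≤ N := by simpa [Real.dist_eq] using hN hx
    have h1 : -N ≤ x := by linarith [abs_le.1 hx'|>.1]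
    have h2 : x ≤ N := (abs_le.1 hx').2
    rw [Finset.sup_set_eq_biUnion]
    refine Set.mem_biUnion (show ⌊x⌋ ∈ Finset.Icc (⌊-N⌋) (⌈N⌉) from ?_) ?_
    · simp only [Finset.mem_Icc]
      constructor
      · exact Int.floor_le_floor h1
      · exact_mod_cast ((Int.floor_le x).trans (h2.trans (Int.le_ceil N))) |> fun h => Int.cast_le.mp h
    · exact ⟨x, ⟨hx, rfl⟩, (Int.self_sub_floor x).symm ▸ rfl⟩
  refine Set.IsWF.mono ?_ hsub
  rw [Finset.isWF_sup]
  exact fun m _ => sub_image_isWF _ _ (hX.mono Set.inter_subset_left)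
end

section
/- Let x be irrational and let a_0 < a_1 < a_2 < ... be natural numbers such that the sequence (a_i·x mod 1) is strictly increasing with limit 1. Let A = {a_0, a_1, ...} and let hA denote the h-fold sumset of A for a positive integer h. Then x∗hA = {x·s mod 1 : s ∈ hA} is well-ordered by the usual order on ℝ with order type ω^h. -/
/-- The order type of a well-ordered set of reals. -/
noncomputable def orderType (s : Set ℝ) (h : s.IsWF) : Ordinal :=
  haveI : WellFoundedLT s := ⟨h⟩
  Ordinal.type ((· < ·) : s → s → Prop)

/-!
Put `ε i = 1 - {x aᵢ}`, positive and decreasing to `0`. Since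
`x (a_{i₁} + ⋯ + a_{i_h}) ≡ -(ε_{i₁} + ⋯ + ε_{i_h}) (mod 1)`, the set `x∗hA` is the image of
the `h`-fold sumset `S_h` of the `ε i` under `t ↦ {-t} = ⌈t⌉ - t`.

Upper bound: a sum `t ≥ δ > 0` of `h` terms has its largest term among the finitely many
`ε i ≥ δ / h`, so every proper initial segment of `-S_h`, and of `x∗hA`, lies in finitely many
translates of `-S_{h-1}`. By induction `-S_{h-1}` has type `≤ ω^(h-1)`, and a finite union of
sets of type `< ω^h` has type `< ω^h`, since the type of `X ∪ Y` is at most the natural sum of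
the types of `X` and `Y`.

Lower bound: along a subsequence with `ε (c (m+1)) < ε (c m) / 2`, the map
`ω^(h-1) * q + r ↦ ε (c q) + (the sum attached to r, built from later terms)` embeds `ω^h`
decreasingly into `S_h ∩ (0, 1)`, hence increasingly into `x∗hA`.
-/
open Set Ordinal Filter Topology Pointwise

section OrderType

variable {S T : Set ℝ}

theorem orderType_mono (hS : S.IsWF) (hT : T.IsWF) (h : S ⊆ T) :
    orderType S hS ≤ orderType T hT := by
  have : WellFoundedLT S := ⟨hS⟩
  have : WellFoundedLT T := ⟨hT⟩
  exact (RelEmbedding.ofMonotone (r := (· < ·)) (s := (· < ·)) (inclusion h)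
    fun _ _ => id).ordinal_type_le

theorem orderType_image_of_strictMono (hS : S.IsWF) {f : ℝ → ℝ} (hf : StrictMono f)
    (hfS : (f '' S).IsWF) : orderType (f '' S) hfS = orderType S hS := by
  have : WellFoundedLT S := ⟨hS⟩
  have : WellFoundedLT (f '' S) := ⟨hfS⟩
  exact (type_eq.2 ⟨((hf.strictMonoOn S).orderIso f S).toRelIsoLT⟩).symm

theorem orderType_inter_Iio (hS : S.IsWF) {z : ℝ} (hz : z ∈ S) :
    letI : WellFoundedLT S := ⟨hS⟩
    orderType (S ∩ Iio z) (hS.mono inter_subset_left) = typein (α := S) (· < ·) ⟨z, hz⟩ := by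
  have : WellFoundedLT S := ⟨hS⟩
  have : WellFoundedLT (S ∩ Iio z : Set ℝ) := ⟨hS.mono inter_subset_left⟩
  rw [← type_Iio_lt]
  exact type_eq.2 ⟨{ toFun := fun y => ⟨⟨y, y.2.1⟩, y.2.2⟩
                     invFun := fun y => ⟨y, y.1.2, y.2⟩
                     left_inv := fun _ => rfl
                     right_inv := fun _ => rfl
                     map_rel_iff' := Iff.rfl }⟩

theorem orderType_inter_Iio_lt (hS : S.IsWF) {z : ℝ} (hz : z ∈ S) :
    orderType (S ∩ Iio z) (hS.mono inter_subset_left) < orderType S hS := by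
  have : WellFoundedLT S := ⟨hS⟩
  rw [orderType_inter_Iio hS hz]
  exact typein_lt_type _ _

theorem orderType_le_of_forall_inter_Iio (hS : S.IsWF) {o : Ordinal}
    (h : ∀ z ∈ S, orderType (S ∩ Iio z) (hS.mono inter_subset_left) < o) :
    orderType S hS ≤ o := by
  have : WellFoundedLT S := ⟨hS⟩
  by_contra! ho
  obtain ⟨z, hz⟩ := typein_surj (· < ·) ho
  exact (h z z.2).ne (by rw [orderType_inter_Iio hS z.2, hz])

theorem isWF_of_forall_inter_Iio (h : ∀ z ∈ S, (S ∩ Iio z).IsWF) : S.IsWF := by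
  rw [isWF_iff_no_descending_seq]
  intro u hu huS
  exact isWF_iff_no_descending_seq.1 (h (u 0) (huS 0)) (fun n => u (n + 1))
    (fun m n hmn => hu (Nat.succ_lt_succ hmn)) fun n => ⟨huS (n + 1), hu n.succ_pos⟩

theorem exists_orderType_le_of_forall_inter_Iio {o : Ordinal}
    (h : ∀ z ∈ S, ∃ hz : (S ∩ Iio z).IsWF, orderType _ hz < o) :
    ∃ hS : S.IsWF, orderType S hS ≤ o :=
  have hS := isWF_of_forall_inter_Iio fun z hz => (h z hz).1
  ⟨hS, orderType_le_of_forall_inter_Iio hS fun z hz => (h z hz).2⟩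

theorem le_orderType_of_strictMonoOn (hS : S.IsWF) {o : Ordinal} {f : Ordinal → ℝ}
    (hf : StrictMonoOn f (Iio o)) (hfS : MapsTo f (Iio o) S) : o ≤ orderType S hS := by
  have : WellFoundedLT S := ⟨hS⟩
  rw [← type_toType o]
  exact type_le_iff'.2 ⟨RelEmbedding.ofMonotone
    (fun y => ⟨f (ToType.mk.symm y), hfS (ToType.mk.symm y).2⟩)
    fun a b hab => hf (ToType.mk.symm a).2 (ToType.mk.symm b).2 (ToType.mk.symm.lt_iff_lt.2 hab)⟩

end OrderType

namespace Ordinal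

theorem div_lt_div_or_of_lt {a a' : Ordinal} (b : Ordinal) (h : a < a') :
    a / b < a' / b ∨ a / b = a' / b ∧ a % b < a' % b := by
  refine (div_le_left h.le b).lt_or_eq.imp_right fun hq => ⟨hq, ?_⟩
  rwa [← div_add_mod a b, ← div_add_mod a' b, hq, add_lt_add_iff_left] at h

theorem mul_add_lt_mul_add {b m n x : Ordinal} (y : Ordinal) (hx : x < b) (hmn : m < n) :
    b * m + x < b * n + y :=
  calc b * m + x < b * m + b := add_lt_add_right hx _
    _ = b * (m + 1) := by rw [mul_add_one]
    _ ≤ b * n := mul_le_mul_right (Order.add_one_le_of_lt hmn) _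
    _ ≤ b * n + y := le_self_add

theorem natCast_toNat_card {o : Ordinal} (ho : o < ω) : ((o.card.toNat : ℕ) : Ordinal) = o := by
  obtain ⟨n, rfl⟩ := lt_omega0.1 ho
  simp

theorem omega0_opow_pos (e : ℕ) : (0 : Ordinal) < ω ^ e := by
  simpa only [opow_natCast] using opow_pos (e : Ordinal) omega0_pos

theorem omega0_opow_lt_succ (e : ℕ) : (ω ^ e : Ordinal) < ω ^ (e + 1) := by
  rw [pow_succ]
  exact lt_mul_of_one_lt_right (omega0_opow_pos e) one_lt_omega0

theorem div_omega0_opow_lt {a : Ordinal} {e : ℕ} (h : a < ω ^ (e + 1)) : a / ω ^ e < ω := by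
  rwa [← lt_mul_iff_div_lt (omega0_opow_pos e).ne', ← pow_succ]

theorem mod_omega0_opow_lt (a : Ordinal) (e : ℕ) : a % ω ^ e < ω ^ e :=
  mod_lt a (omega0_opow_pos e).ne'

end Ordinal

/-- Digitwise addition of base-`ω` expansions with `e` digits: the natural sum below `ω ^ e`. -/
noncomputable def digitAdd : ℕ → Ordinal → Ordinal → Ordinal
  | 0, _, _ => 0
  | e + 1, a, b => ω ^ e * (a / ω ^ e + b / ω ^ e) + digitAdd e (a % ω ^ e) (b % ω ^ e)

section DigitAdd

variable {e : ℕ} {a a' b b' : Ordinal}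

theorem digitAdd_lt (ha : a < ω ^ e) (hb : b < ω ^ e) : digitAdd e a b < ω ^ e := by
  induction e generalizing a b with
  | zero => simp [digitAdd]
  | succ e ih =>
    have hq := isPrincipal_add_omega0 (div_omega0_opow_lt ha) (div_omega0_opow_lt hb)
    simpa [digitAdd, pow_succ] using
      mul_add_lt_mul_add 0 (ih (mod_omega0_opow_lt a e) (mod_omega0_opow_lt b e)) hq

theorem digitAdd_lt_digitAdd_left (h : a < a') (ha' : a' < ω ^ e) (hb : b < ω ^ e) :
    digitAdd e a b < digitAdd e a' b := by
  induction e generalizing a a' b with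
  | zero => simp_all
  | succ e ih =>
    rcases div_lt_div_or_of_lt (ω ^ e) h with hq | ⟨hq, hr⟩
    · refine mul_add_lt_mul_add _
        (digitAdd_lt (mod_omega0_opow_lt a e) (mod_omega0_opow_lt b e)) ?_
      obtain ⟨m, hm⟩ := lt_omega0.1 (hq.trans (div_omega0_opow_lt ha'))
      obtain ⟨m', hm'⟩ := lt_omega0.1 (div_omega0_opow_lt ha')
      obtain ⟨n, hn⟩ := lt_omega0.1 (div_omega0_opow_lt hb)
      rw [hm, hm'] at hq
      rw [hm, hm', hn]
      exact_mod_cast Nat.add_lt_add_right (Nat.cast_lt.1 hq) n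
    · simp only [digitAdd, hq]
      exact add_lt_add_right (ih hr (mod_omega0_opow_lt a' e) (mod_omega0_opow_lt b e)) _

theorem digitAdd_lt_digitAdd_right (h : b < b') (ha : a < ω ^ e) (hb' : b' < ω ^ e) :
    digitAdd e a b < digitAdd e a b' := by
  induction e generalizing a b b' with
  | zero => simp_all
  | succ e ih =>
    rcases div_lt_div_or_of_lt (ω ^ e) h with hq | ⟨hq, hr⟩
    · exact mul_add_lt_mul_add _
        (digitAdd_lt (mod_omega0_opow_lt a e) (mod_omega0_opow_lt b e)) (add_lt_add_right hq _)
    · simp only [digitAdd, hq]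
      exact add_lt_add_right (ih hr (mod_omega0_opow_lt a e) (mod_omega0_opow_lt b' e)) _

theorem digitAdd_lt_digitAdd (ha : a ≤ a') (hb : b ≤ b') (hlt : a < a' ∨ b < b')
    (ha' : a' < ω ^ e) (hb' : b' < ω ^ e) : digitAdd e a b < digitAdd e a' b' := by
  rcases hlt with hlt | hlt
  · refine (digitAdd_lt_digitAdd_left hlt ha' (hb.trans_lt hb')).trans_le ?_
    rcases hb.lt_or_eq with hb | rfl
    · exact (digitAdd_lt_digitAdd_right hb ha' hb').le
    · exact le_rfl
  · refine (digitAdd_lt_digitAdd_right hlt (ha.trans_lt ha') hb').trans_le ?_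
    rcases ha.lt_or_eq with ha | rfl
    · exact (digitAdd_lt_digitAdd_left ha ha' hb').le
    · exact le_rfl

end DigitAdd

section Union

variable {X Y : Set ℝ} {e : ℕ}

theorem orderType_union_le_digitAdd (hX : X.IsWF) (hY : Y.IsWF)
    (hXe : orderType X hX < ω ^ e) (hYe : orderType Y hY < ω ^ e) :
    orderType (X ∪ Y) (hX.union hY) ≤ digitAdd e (orderType X hX) (orderType Y hY) := by
  generalize hd : digitAdd e (orderType X hX) (orderType Y hY) = d
  induction d using WellFoundedLT.induction generalizing X Y with
  | _ d ih =>
    subst hd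
    refine orderType_le_of_forall_inter_Iio _ fun z hz => ?_
    have hXz := hX.mono (inter_subset_left (t := Iio z))
    have hYz := hY.mono (inter_subset_left (t := Iio z))
    have hXle := orderType_mono hXz hX inter_subset_left
    have hYle := orderType_mono hYz hY inter_subset_left
    have hlt : digitAdd e (orderType _ hXz) (orderType _ hYz) <
        digitAdd e (orderType X hX) (orderType Y hY) :=
      digitAdd_lt_digitAdd hXle hYle
        (hz.imp (orderType_inter_Iio_lt hX) (orderType_inter_Iio_lt hY)) hXe hYe
    have hseg := ih _ hlt hXz hYz (hXle.trans_lt hXe) (hYle.trans_lt hYe) rfl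
    convert hseg.trans_lt hlt using 2
    exact union_inter_distrib_right X Y (Iio z)

theorem orderType_union_lt (hX : X.IsWF) (hY : Y.IsWF)
    (hXe : orderType X hX < ω ^ e) (hYe : orderType Y hY < ω ^ e) :
    orderType (X ∪ Y) (hX.union hY) < ω ^ e :=
  (orderType_union_le_digitAdd hX hY hXe hYe).trans_lt (digitAdd_lt hXe hYe)

theorem exists_orderType_biUnion_lt {ι : Type*} (s : Finset ι) {f : ι → Set ℝ}
    (hf : ∀ i ∈ s, ∃ h : (f i).IsWF, orderType (f i) h < ω ^ e) :
    ∃ h : (⋃ i ∈ s, f i).IsWF, orderType _ h < ω ^ e := by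
  classical
  induction s using Finset.induction_on with
  | empty =>
    simp only [Finset.notMem_empty, iUnion_of_empty, iUnion_empty]
    exact ⟨isWF_empty, by simp [orderType]⟩
  | insert i s hi ih =>
    rw [Finset.set_biUnion_insert]
    obtain ⟨hfi, hfie⟩ := hf i (Finset.mem_insert_self i s)
    obtain ⟨hU, hUe⟩ := ih fun j hj => hf j (Finset.mem_insert_of_mem hj)
    exact ⟨hfi.union hU, orderType_union_lt hfi hU hfie hUe⟩

theorem exists_orderType_biUnion_image_add_lt {T : Set ℝ} (hT : T.IsWF)
    (hTe : orderType T hT ≤ ω ^ e) (C : Finset ℝ) :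
    ∃ h : (⋃ c ∈ C, (c + ·) '' T).IsWF, orderType _ h < ω ^ (e + 1) := by
  refine exists_orderType_biUnion_lt C fun c _ => ?_
  have hcT : ((c + ·) '' T).IsWF := (hT.isPWO.image_of_monotone add_right_mono).isWF
  refine ⟨hcT, ?_⟩
  rw [orderType_image_of_strictMono hT add_right_strictMono hcT]
  exact hTe.trans_lt (omega0_opow_lt_succ e)

end Union

def sumset (ε : ℕ → ℝ) (g : ℕ) : Set ℝ := range fun f : Fin g → ℕ => ∑ j, ε (f j)

section Sumset

variable {ε : ℕ → ℝ} {g : ℕ} {t : ℝ}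

theorem sumset_zero (ε : ℕ → ℝ) : sumset ε 0 = {0} := by
  simp [sumset, range_const]

theorem sumset_comp_subset (ε : ℕ → ℝ) (c : ℕ → ℕ) (g : ℕ) :
    sumset (ε ∘ c) g ⊆ sumset ε g := by
  rintro _ ⟨f, rfl⟩
  exact ⟨c ∘ f, rfl⟩

theorem nonneg_of_mem_sumset (hpos : ∀ i, 0 < ε i) (ht : t ∈ sumset ε g) : 0 ≤ t := by
  obtain ⟨f, rfl⟩ := ht
  exact Finset.sum_nonneg fun j _ => (hpos (f j)).le

theorem pos_of_mem_sumset_succ (hpos : ∀ i, 0 < ε i) (ht : t ∈ sumset ε (g + 1)) : 0 < t := by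
  obtain ⟨f, rfl⟩ := ht
  exact Finset.sum_pos (fun j _ => hpos (f j)) Finset.univ_nonempty

theorem le_mul_of_mem_sumset (hε : Antitone ε) (ht : t ∈ sumset ε g) : t ≤ g * ε 0 := by
  obtain ⟨f, rfl⟩ := ht
  simpa using Finset.sum_le_card_nsmul Finset.univ _ _ fun j _ => hε (Nat.zero_le (f j))

theorem exists_sub_mem_sumset_of_mem_sumset_succ (hε : Antitone ε) (ht : t ∈ sumset ε (g + 1)) :
    ∃ i, t - ε i ∈ sumset ε g ∧ t ≤ (g + 1) * ε i := by
  obtain ⟨f, rfl⟩ := ht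
  obtain ⟨j₀, -, hj₀⟩ := Finset.exists_min_image Finset.univ f Finset.univ_nonempty
  refine ⟨f j₀, ⟨f ∘ j₀.succAbove, ?_⟩, ?_⟩
  · simp [Fin.sum_univ_succAbove _ j₀]
  · simpa using Finset.sum_le_card_nsmul Finset.univ _ _
      fun j _ => hε (hj₀ j (Finset.mem_univ j))

/-- The term peeled off is the largest one, hence at least `δ / (g + 1)`: only finitely many
`ε i` are that large. -/
theorem exists_forall_sub_mem_sumset (hε : Antitone ε) (hlim : Tendsto ε atTop (𝓝 0))
    {δ : ℝ} (hδ : 0 < δ) (g : ℕ) :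
    ∃ N, ∀ t ∈ sumset ε (g + 1), δ ≤ t → ∃ i < N, t - ε i ∈ sumset ε g := by
  obtain ⟨N, hN⟩ := eventually_atTop.1
    (hlim.eventually (gt_mem_nhds (div_pos hδ (Nat.cast_add_one_pos g))))
  refine ⟨N, fun t ht hδt => ?_⟩
  obtain ⟨i, hi, hti⟩ := exists_sub_mem_sumset_of_mem_sumset_succ hε ht
  refine ⟨i, not_le.1 fun hNi => ?_, hi⟩
  have := hN i hNi
  rw [lt_div_iff₀' (Nat.cast_add_one_pos g)] at this
  linarith

end Sumset

theorem Int.fract_neg_eq_ceil_sub {R : Type*} [Ring R] [LinearOrder R] [IsStrictOrderedRing R]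
    [FloorRing R] (t : R) : Int.fract (-t) = ⌈t⌉ - t := by
  rw [Int.fract, Int.floor_neg, Int.cast_neg, sub_neg_eq_add, neg_add_eq_sub]

section UpperBound

variable {ε : ℕ → ℝ}

theorem exists_orderType_le_of_forall_lt_eq_sub (hε : Antitone ε)
    (hlim : Tendsto ε atTop (𝓝 0)) {g : ℕ} (hS : (-sumset ε g).IsWF)
    (hSg : orderType _ hS ≤ ω ^ g) {X : Set ℝ}
    (hX : ∀ z ∈ X, ∃ δ > 0, ∃ K : Finset ℝ,
      ∀ y ∈ X, y < z → ∃ k ∈ K, ∃ t ∈ sumset ε (g + 1), δ ≤ t ∧ y = k - t) :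
    ∃ hX : X.IsWF, orderType X hX ≤ ω ^ (g + 1) := by
  classical
  refine exists_orderType_le_of_forall_inter_Iio fun z hz => ?_
  obtain ⟨δ, hδ, K, hK⟩ := hX z hz
  obtain ⟨N, hN⟩ := exists_forall_sub_mem_sumset hε hlim hδ g
  obtain ⟨hU, hUg⟩ := exists_orderType_biUnion_image_add_lt hS hSg
    ((K ×ˢ Finset.range N).image fun p => p.1 - ε p.2)
  have hsub : X ∩ Iio z ⊆ ⋃ c ∈ (K ×ˢ Finset.range N).image (fun p => p.1 - ε p.2),
      (c + ·) '' (-sumset ε g) := by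
    rintro y ⟨hy, hyz⟩
    obtain ⟨k, hk, t, ht, hδt, rfl⟩ := hK y hy hyz
    obtain ⟨i, hi, hti⟩ := hN t ht hδt
    refine mem_iUnion₂.2 ⟨k - ε i, Finset.mem_image.2 ⟨(k, i), ?_, rfl⟩, -(t - ε i), ?_, ?_⟩
    · exact Finset.mem_product.2 ⟨hk, Finset.mem_range.2 hi⟩
    · simpa using hti
    · ring
  exact ⟨hU.mono hsub, (orderType_mono _ hU hsub).trans_lt hUg⟩

theorem exists_orderType_neg_sumset_le (hpos : ∀ i, 0 < ε i) (hε : Antitone ε)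
    (hlim : Tendsto ε atTop (𝓝 0)) (g : ℕ) :
    ∃ hS : (-sumset ε g).IsWF, orderType _ hS ≤ ω ^ g := by
  induction g with
  | zero =>
    simp only [sumset_zero, neg_singleton, neg_zero, pow_zero]
    exact ⟨isWF_singleton, (type_eq_one_of_unique _).le⟩
  | succ g ih =>
    obtain ⟨hS, hSg⟩ := ih
    refine exists_orderType_le_of_forall_lt_eq_sub hε hlim hS hSg fun z hz => ?_
    refine ⟨-z, pos_of_mem_sumset_succ hpos hz, {0}, fun y hy hyz => ?_⟩
    exact ⟨0, Finset.mem_singleton_self 0, -y, hy, by linarith, by ring⟩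

theorem exists_orderType_fract_neg_sumset_le (hpos : ∀ i, 0 < ε i) (hε : Antitone ε)
    (hlim : Tendsto ε atTop (𝓝 0)) (g : ℕ) :
    ∃ hR : ((fun t => Int.fract (-t)) '' sumset ε (g + 1)).IsWF,
      orderType _ hR ≤ ω ^ (g + 1) := by
  obtain ⟨hS, hSg⟩ := exists_orderType_neg_sumset_le hpos hε hlim g
  refine exists_orderType_le_of_forall_lt_eq_sub hε hlim hS hSg ?_
  rintro _ ⟨τ, -, rfl⟩
  refine ⟨1 - Int.fract (-τ), sub_pos.2 (Int.fract_lt_one _),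
    (Finset.Icc 0 ⌈(g + 1) * ε 0⌉).image Int.cast, ?_⟩
  rintro _ ⟨t, ht, rfl⟩ hyz
  have ht0 := pos_of_mem_sumset_succ hpos ht
  have hceil : (1 : ℝ) ≤ ⌈t⌉ := by exact_mod_cast Int.one_le_ceil_iff.2 ht0
  refine ⟨⌈t⌉, Finset.mem_image_of_mem _ (Finset.mem_Icc.2 ⟨Int.ceil_nonneg ht0.le,
    Int.ceil_mono (by simpa using le_mul_of_mem_sumset hε ht)⟩), t, ht, ?_,
    Int.fract_neg_eq_ceil_sub t⟩
  simp only [Int.fract_neg_eq_ceil_sub] at hyz ⊢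
  linarith

end UpperBound

section LowerBound

theorem exists_subseq_two_mul_lt {ε : ℕ → ℝ} (hpos : ∀ i, 0 < ε i)
    (hlim : Tendsto ε atTop (𝓝 0)) :
    ∃ c : ℕ → ℕ, 2 * ε (c 0) < 1 ∧ ∀ m, 2 * ε (c (m + 1)) < ε (c m) := by
  have hsmall : ∀ δ : ℝ, ∃ i, 0 < δ → 2 * ε i < δ := fun δ => by
    by_cases hδ : 0 < δ
    · obtain ⟨i, hi⟩ := (hlim.eventually (gt_mem_nhds (half_pos hδ))).exists
      exact ⟨i, fun _ => by linarith⟩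
    · exact ⟨0, fun h => absurd h hδ⟩
  choose pick hpick using hsmall
  exact ⟨fun m => Nat.rec (pick 1) (fun _ i => pick (ε i)) m, hpick 1 one_pos,
    fun m => hpick _ (hpos _)⟩

/-- `ω ^ g * q + r ↦ η q + (the sum attached to r, built from the terms after η q)`: the fast decay
makes the first term decide the comparison. -/
theorem exists_strictAntiOn_sumset (g : ℕ) : ∀ η : ℕ → ℝ, (∀ m, 0 < η m) →
    (∀ m, 2 * η (m + 1) < η m) → ∃ φ : Ordinal → ℝ, StrictAntiOn φ (Iio (ω ^ g)) ∧
      ∀ o < ω ^ g, φ o ∈ sumset η g ∧ φ o < 2 * η 0 := by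
  induction g with
  | zero =>
    refine fun η hpos _ => ⟨0, fun o ho o' ho' h => ?_, fun o _ => ⟨by simp [sumset_zero], ?_⟩⟩
    · simp_all
    · simpa using hpos 0
  | succ g ih =>
    intro η hpos hfast
    have hanti : StrictAnti η :=
      strictAnti_nat_of_succ_lt fun m => by linarith [hfast m, hpos (m + 1)]
    choose ψ hψanti hψ using fun n : ℕ => ih (fun m => η (m + n + 1)) (fun m => hpos _)
      fun m => by simpa [add_right_comm] using hfast (m + n + 1)
    set d : Ordinal → ℕ := fun o => (o / ω ^ g).card.toNat
    have hd : ∀ o < ω ^ (g + 1), ((d o : ℕ) : Ordinal) = o / ω ^ g := fun o ho =>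
      natCast_toNat_card (div_omega0_opow_lt ho)
    have hbound : ∀ o, η (d o) + ψ (d o) (o % ω ^ g) < 2 * η (d o) := fun o => by
      have hψo := (hψ (d o) _ (mod_omega0_opow_lt o g)).2
      rw [zero_add] at hψo
      linarith [hfast (d o)]
    refine ⟨fun o => η (d o) + ψ (d o) (o % ω ^ g), fun o ho o' ho' hoo' => ?_,
      fun o ho => ⟨?_, ?_⟩⟩
    · rcases div_lt_div_or_of_lt (ω ^ g) hoo' with hq | ⟨hq, hr⟩
      · rw [← hd o ho, ← hd o' ho', Nat.cast_lt] at hq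
        have hψo := nonneg_of_mem_sumset (fun m => hpos _)
          (hψ (d o) _ (mod_omega0_opow_lt o g)).1
        dsimp only
        linarith [hbound o', hanti.antitone (Nat.succ_le_of_lt hq), hfast (d o)]
      · have hdd : d o = d o' := by
          rw [← Nat.cast_inj (R := Ordinal), hd o ho, hd o' ho', hq]
        simp only [hdd]
        exact add_lt_add_right
          (hψanti _ (mod_omega0_opow_lt o g) (mod_omega0_opow_lt o' g) hr) _
    · obtain ⟨f, hf⟩ := (hψ (d o) _ (mod_omega0_opow_lt o g)).1
      exact ⟨Fin.cons (d o) fun j => f j + d o + 1, by simp [Fin.sum_univ_succ, ← hf]⟩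
    · exact (hbound o).trans_le (by linarith [hanti.antitone (Nat.zero_le (d o))])

theorem le_orderType_fract_neg_sumset {ε : ℕ → ℝ} (hpos : ∀ i, 0 < ε i)
    (hlim : Tendsto ε atTop (𝓝 0)) (g : ℕ)
    (hR : ((fun t => Int.fract (-t)) '' sumset ε (g + 1)).IsWF) :
    ω ^ (g + 1) ≤ orderType _ hR := by
  obtain ⟨c, hc0, hc⟩ := exists_subseq_two_mul_lt hpos hlim
  obtain ⟨φ, hφanti, hφ⟩ := exists_strictAntiOn_sumset (g + 1) (ε ∘ c) (fun m => hpos _) hc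
  have hfract : ∀ o < ω ^ (g + 1), Int.fract (-φ o) = 1 - φ o := fun o ho => by
    have h0 := pos_of_mem_sumset_succ (fun m => hpos _) (hφ o ho).1
    have h1 : φ o < 1 := (hφ o ho).2.trans hc0
    rw [Int.fract_neg_eq_ceil_sub, (Int.ceil_eq_iff (z := 1)).2
      ⟨by norm_num [h0], by norm_num [h1.le]⟩, Int.cast_one]
  refine le_orderType_of_strictMonoOn hR (f := fun o => Int.fract (-φ o))
    (fun o ho o' ho' h => ?_) fun o ho => ⟨φ o, sumset_comp_subset ε c _ (hφ o ho).1, rfl⟩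
  simp only [hfract o ho, hfract o' ho']
  linarith [hφanti ho ho' h]

end LowerBound

theorem fract_mul_sum_eq_fract_neg_sum (x : ℝ) (a : ℕ → ℕ) {h : ℕ} (f : Fin h → ℕ) :
    Int.fract (x * ((∑ j, a (f j) : ℕ) : ℝ)) =
      Int.fract (-∑ j, (1 - Int.fract (x * a (f j)))) := by
  refine Int.fract_eq_fract.2 ⟨∑ j, (⌊x * a (f j)⌋ + 1), ?_⟩
  push_cast
  rw [Finset.mul_sum, sub_neg_eq_add, ← Finset.sum_add_distrib]
  refine Finset.sum_congr rfl fun j _ => ?_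
  rw [← Int.self_sub_fract]
  ring

theorem image_fract_mul_eq_image_fract_neg_sumset (x : ℝ) (a : ℕ → ℕ) (h : ℕ) :
    (fun s : ℕ => Int.fract (x * s)) ''
        {s | ∃ f : Fin h → ℕ, (∀ i, f i ∈ range a) ∧ s = ∑ i, f i} =
      (fun t => Int.fract (-t)) '' sumset (fun i => 1 - Int.fract (x * a i)) h := by
  ext y
  constructor
  · rintro ⟨_, ⟨f, hf, rfl⟩, rfl⟩
    choose g hg using hf
    obtain rfl : (fun j => a (g j)) = f := funext hg
    exact ⟨_, ⟨g, rfl⟩, (fract_mul_sum_eq_fract_neg_sum x a g).symm⟩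
  · rintro ⟨_, ⟨g, rfl⟩, rfl⟩
    exact ⟨_, ⟨fun j => a (g j), fun j => mem_range_self _, rfl⟩,
      fract_mul_sum_eq_fract_neg_sum x a g⟩

theorem stmt_9_general (x : ℝ) (a : ℕ → ℕ)
    (hmono : StrictMono fun i => Int.fract (x * a i))
    (hlim : Filter.Tendsto (fun i => Int.fract (x * a i)) Filter.atTop (nhds 1))
    (h : ℕ) (hh : 1 ≤ h) :
    ∃ hWF : ((fun s : ℕ => Int.fract (x * s)) ''
        {s | ∃ f : Fin h → ℕ, (∀ i, f i ∈ Set.range a) ∧ s = ∑ i, f i}).IsWF,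
      orderType _ hWF = Ordinal.omega0 ^ h := by
  obtain ⟨g, rfl⟩ := Nat.exists_eq_add_of_le' hh
  set ε : ℕ → ℝ := fun i => 1 - Int.fract (x * a i)
  have hpos : ∀ i, 0 < ε i := fun i => sub_pos.2 (Int.fract_lt_one _)
  have hε : Antitone ε := fun i j hij => sub_le_sub_left (hmono.monotone hij) 1
  have hlim0 : Tendsto ε atTop (𝓝 0) := by simpa using hlim.const_sub 1
  rw [image_fract_mul_eq_image_fract_neg_sumset]
  obtain ⟨hR, hRle⟩ := exists_orderType_fract_neg_sumset_le hpos hε hlim0 g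
  exact ⟨hR, hRle.antisymm (le_orderType_fract_neg_sumset hpos hlim0 g hR)⟩

/-- If `x` is irrational, `a₀ < a₁ < ⋯` are naturals with `aᵢ·x mod 1` strictly
increasing to `1`, `A = {a₀, a₁, …}` and `hA` is the `h`-fold sumset, then
`x∗hA` is well-ordered with order type `ω^h`. -/
theorem stmt_9 (x : ℝ) (hx : Irrational x) (a : ℕ → ℕ) (ha : StrictMono a)
    (hmono : StrictMono fun i => Int.fract (x * a i))
    (hlim : Filter.Tendsto (fun i => Int.fract (x * a i)) Filter.atTop (nhds 1))
    (h : ℕ) (hh : 1 ≤ h) :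
    ∃ hWF : ((fun s : ℕ => Int.fract (x * s)) ''
        {s | ∃ f : Fin h → ℕ, (∀ i, f i ∈ Set.range a) ∧ s = ∑ i, f i}).IsWF,
      orderType _ hWF = Ordinal.omega0 ^ h :=
  stmt_9_general x a hmono hlim h hh
end

section
/- Let x be irrational and let A ⊆ ℕ be such that x∗A = {x·a mod 1 : a ∈ A} is well-ordered by the usual order on ℝ. Then A has natural density 0, i.e., |A ∩ [0,n)|/n → 0 as n → ∞. -/
/-!
The closure `T` of `x∗A` is compact, and it is countable because well-orderedness leaves a
gap `(t, y)` free of `x∗A` to the right of every point `t`. So for every `ε > 0`, `T` is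
covered by finitely many balls of total radius `ε`.

An irrational rotation visits a ball of radius `r` with frequency at most `8r`: Dirichlet
gives `Q` with `‖Qx‖ ∈ [2r, 4r]`, and then the translates of the set of visiting times by
`0, Q, 2Q, …, (⌊1/(4r)⌋ - 1)Q` are pairwise disjoint. Summing over the balls, the upper
density of `A` is at most `8ε`.
-/

open Filter Topology Finset

namespace Set

variable {α : Type*} [LinearOrder α]

theorem IsWF.exists_gt_inter_Ioo_eq_empty [NoMaxOrder α] {s : Set α} (hs : s.IsWF) (t : α) :
    ∃ y, t < y ∧ s ∩ Ioo t y = ∅ := by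
  by_cases hne : (s ∩ Ioi t).Nonempty
  · have hwf : (s ∩ Ioi t).IsWF := hs.mono inter_subset_left
    exact ⟨hwf.min hne, (hwf.min_mem hne).2, eq_empty_of_forall_notMem
      fun u ⟨hu, htu, hum⟩ => hwf.not_lt_min hne ⟨hu, htu⟩ hum⟩
  · obtain ⟨y, hy⟩ := exists_gt t
    exact ⟨y, hy, eq_empty_of_forall_notMem fun u ⟨hu, htu, _⟩ => hne ⟨u, hu, htu⟩⟩

theorem IsWF.countable_closure [TopologicalSpace α] [OrderTopology α]
    [SecondCountableTopology α] [NoMaxOrder α] {s : Set α} (hs : s.IsWF) :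
    (closure s).Countable := by
  choose y hty hy using hs.exists_gt_inter_Ioo_eq_empty
  have hgap (t : α) : closure s ∩ Ioo t (y t) = ∅ := by
    rw [← not_nonempty_iff_eq_empty, closure_inter_open_nonempty_iff isOpen_Ioo, hy t]
    exact not_nonempty_empty
  refine PairwiseDisjoint.countable_of_Ioo (y := y) ?_ fun t _ => hty t
  intro a ha b hb hab
  wlog hlt : a < b generalizing a b
  · exact (this hb ha hab.symm (lt_of_le_of_ne (not_lt.1 hlt) hab.symm)).symm
  have hyb : y a ≤ b := not_lt.1 fun hb' => (hgap a).subset ⟨hb, hlt, hb'⟩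
  exact disjoint_left.2 fun u hu hv => lt_asymm (hu.2.trans_le hyb) hv.1

end Set

theorem IsCompact.exists_finset_ball_cover_sum_radius_le {X : Type*} [PseudoMetricSpace X]
    {T : Set X} (hc : IsCompact T) (hT : T.Countable) {ε : ℝ} (hε : 0 < ε) :
    ∃ (F : Finset X) (r : X → ℝ), (∀ t, 0 < r t) ∧ T ⊆ ⋃ t ∈ F, Metric.ball t (r t) ∧
      ∑ t ∈ F, r t ≤ ε := by
  obtain ⟨f, hf⟩ := Set.countable_iff_exists_injOn.1 hT
  obtain ⟨F, hFT, hcover⟩ := hc.elim_nhds_subcover (fun t => Metric.ball t (ε / 2 / 2 ^ f t))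
    fun t _ => Metric.ball_mem_nhds t (by positivity)
  refine ⟨F, fun t => ε / 2 / 2 ^ f t, fun t => by positivity, hcover, ?_⟩
  calc ∑ t ∈ F, ε / 2 / 2 ^ f t = ∑ k ∈ F.image f, ε / 2 / 2 ^ k :=
        (Finset.sum_image (f := fun k : ℕ => ε / 2 / 2 ^ k)
          fun a ha b hb h => hf (hFT a ha) (hFT b hb) h).symm
  _ ≤ ∑' k : ℕ, ε / 2 / 2 ^ k :=
        Summable.sum_le_tsum _ (fun _ _ => by positivity) (summable_geometric_two' ε)
  _ = ε := tsum_geometric_two' ε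

theorem card_mul_card_filter_range_le_of_disjoint_shifts {ι : Type*} (J : Finset ι) (s : ι → ℕ)
    {B : ℕ} (hB : ∀ i ∈ J, s i ≤ B) (P : ℕ → Prop) [DecidablePred P]
    (hdisj : ∀ i ∈ J, ∀ j ∈ J, ∀ a b, P a → P b → a + s i = b + s j → i = j) (n : ℕ) :
    #J * #{a ∈ range n | P a} ≤ n + B := by
  rw [← card_product, ← card_range (n + B)]
  refine card_le_card_of_injOn (fun p => p.2 + s p.1) (fun p hp => ?_) fun p hp q hq hpq => ?_
  · simp only [coe_product, Set.mem_prod, mem_coe, mem_filter, Finset.mem_range] at hp ⊢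
    linarith [hB _ hp.1]
  · simp only [coe_product, Set.mem_prod, mem_coe, mem_filter] at hp hq
    have hi := hdisj _ hp.1 _ hq.1 _ _ hp.2.2 hq.2.2 hpq
    simp only [hi] at hpq
    exact Prod.ext hi (by omega)

theorem le_dist_fract_add_of_dist_fract_lt {v w c r : ℝ} (h : ∀ m : ℤ, 2 * r ≤ |w - m|)
    (hv : dist (Int.fract v) c < r) : r ≤ dist (Int.fract (v + w)) c := by
  have hw := h (⌊v + w⌋ - ⌊v⌋)
  have hfract : w - ((⌊v + w⌋ - ⌊v⌋ : ℤ) : ℝ) = Int.fract (v + w) - Int.fract v := by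
    rw [Int.fract, Int.fract]; push_cast; ring
  rw [hfract, ← Real.dist_eq] at hw
  linarith [dist_triangle_right (Int.fract (v + w)) (Int.fract v) c]

theorem le_abs_natCast_mul_sub_intCast {y ℓ : ℝ} {j : ℤ} (h₁ : ℓ ≤ |y - j|)
    (h₂ : |y - j| ≤ 2 * ℓ) {d : ℕ} (hd : 1 ≤ d) (hdℓ : 2 * d * ℓ ≤ 1 - ℓ) (m : ℤ) :
    ℓ ≤ |d * y - m| := by
  have hd' : (1 : ℝ) ≤ d := by exact_mod_cast hd
  have hdδ : |d * (y - j)| = d * |y - j| := by rw [abs_mul, Nat.abs_cast]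
  have hsplit : d * y - m = ((d * j - m : ℤ) : ℝ) + d * (y - j) := by push_cast; ring
  rw [hsplit]
  rcases eq_or_ne (d * j - m) 0 with hk | hk
  · rw [hk, Int.cast_zero, zero_add, hdδ]
    nlinarith
  · have hk1 : (1 : ℝ) ≤ |((d * j - m : ℤ) : ℝ)| := by
      rw [← Int.cast_abs]; exact_mod_cast Int.one_le_abs hk
    have := abs_add_le (((d * j - m : ℤ) : ℝ) + d * (y - j)) (-(d * (y - j)))
    rw [add_neg_cancel_right, abs_neg, hdδ] at this
    nlinarith

theorem Irrational.exists_nat_abs_mul_sub_int_mem_Icc {x : ℝ} (hx : Irrational x) {ℓ : ℝ}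
    (hℓ : 0 < ℓ) : ∃ (Q : ℕ) (j : ℤ), ℓ ≤ |Q * x - j| ∧ |Q * x - j| ≤ 2 * ℓ := by
  obtain ⟨k, hk, -, hδℓ⟩ :=
    Real.exists_nat_abs_mul_sub_round_le x (Nat.ceil_pos.2 (inv_pos.2 hℓ))
  set δ := k * x - round (k * x)
  have hδ : 0 < |δ| := abs_pos.2 (sub_ne_zero.2 ((hx.natCast_mul hk.ne').ne_int _))
  have hδℓ : |δ| ≤ ℓ := by
    refine hδℓ.trans ?_
    rw [div_le_iff₀ (by positivity)]
    have := Nat.le_ceil ℓ⁻¹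
    rw [inv_le_iff_one_le_mul₀ hℓ] at this
    nlinarith
  set m := ⌈ℓ / |δ|⌉₊
  refine ⟨m * k, m * round (k * x), ?_⟩
  have hmδ : ((m * k : ℕ) : ℝ) * x - ((m * round (k * x) : ℤ) : ℝ) = m * δ := by
    push_cast; ring
  rw [hmδ, abs_mul, Nat.abs_cast]
  constructor
  · exact (div_le_iff₀ hδ).1 (Nat.le_ceil _)
  · calc m * |δ| ≤ (ℓ / |δ| + 1) * |δ| := by
          gcongr; exact (Nat.ceil_lt_add_one (by positivity)).le
    _ = ℓ + |δ| := by field_simp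
    _ ≤ 2 * ℓ := by linarith

theorem eq_of_dist_fract_lt_of_add_mul_eq {x c r : ℝ} {Q K : ℕ}
    (hsep : ∀ d : ℕ, 1 ≤ d → d < K → ∀ m : ℤ, 2 * r ≤ |x * (d * Q : ℕ) - m|)
    {i i' a b : ℕ} (hi : i < K) (hi' : i' < K) (ha : dist (Int.fract (x * a)) c < r)
    (hb : dist (Int.fract (x * b)) c < r) (hab : a + i * Q = b + i' * Q) : i = i' := by
  by_contra hne
  wlog hlt : i < i' generalizing i i' a b
  · exact this hi' hi hb ha hab.symm (Ne.symm hne) (lt_of_le_of_ne (not_lt.1 hlt) (Ne.symm hne))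
  have hshift : x * a = x * b + x * ((i' - i) * Q : ℕ) := by
    have : a = b + (i' - i) * Q := by
      rw [Nat.sub_mul]; have := Nat.mul_le_mul_right Q hlt.le; omega
    rw [this]; push_cast; ring
  have := le_dist_fract_add_of_dist_fract_lt (hsep (i' - i) (by omega) (by omega)) hb
  rw [← hshift] at this
  linarith

theorem Irrational.exists_card_filter_dist_fract_lt_le {x : ℝ} (hx : Irrational x) (c : ℝ)
    {r : ℝ} (hr : 0 < r) : ∃ C : ℝ, ∀ n : ℕ,
      ((#{a ∈ range n | dist (Int.fract (x * (a : ℕ))) c < r} : ℕ) : ℝ) ≤ 8 * r * n + C := by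
  rcases lt_or_ge (1 / 8) r with hr8 | hr8
  · refine ⟨0, fun n => ?_⟩
    have : ((#{a ∈ range n | dist (Int.fract (x * (a : ℕ))) c < r} : ℕ) : ℝ) ≤ n := by
      exact_mod_cast (card_filter_le _ _).trans (card_range n).le
    nlinarith
  obtain ⟨Q, j, hQ₁, hQ₂⟩ := hx.exists_nat_abs_mul_sub_int_mem_Icc (mul_pos two_pos hr)
  set K := ⌊1 / (4 * r)⌋₊
  have hKr : (K : ℝ) * (4 * r) ≤ 1 :=
    (le_div_iff₀ (by positivity)).1 (Nat.floor_le (by positivity))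
  have hK : 1 ≤ (K : ℝ) * (8 * r) := by
    have hfloor : 1 / (4 * r) - 1 < K := Nat.sub_one_lt_floor _
    have : (1 / (4 * r) - 1) * (8 * r) = 2 - 8 * r := by field_simp; ring
    nlinarith
  have hsep (d : ℕ) (hd : 1 ≤ d) (hdK : d < K) (m : ℤ) : 2 * r ≤ |x * (d * Q : ℕ) - m| := by
    have hdK' : ((d + 1 : ℕ) : ℝ) ≤ K := Nat.cast_le.2 hdK
    have := le_abs_natCast_mul_sub_intCast hQ₁ hQ₂ hd (by push_cast at hdK'; nlinarith) m
    convert this using 3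
    push_cast; ring
  have hpack := card_mul_card_filter_range_le_of_disjoint_shifts (range K) (· * Q) (B := K * Q)
    (fun i hi => Nat.mul_le_mul_right Q (Finset.mem_range.1 hi).le)
    (fun a : ℕ => dist (Int.fract (x * a)) c < r) fun i hi i' hi' a b ha hb hab =>
      eq_of_dist_fract_lt_of_add_mul_eq hsep (Finset.mem_range.1 hi) (Finset.mem_range.1 hi')
        ha hb hab
  refine ⟨2 * Q, fun n => ?_⟩
  have hcount : (K : ℝ) * #{a ∈ range n | dist (Int.fract (x * (a : ℕ))) c < r} ≤ n + K * Q := by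
    exact_mod_cast card_range K ▸ hpack n
  nlinarith

theorem Irrational.exists_ncard_inter_Iio_le {x : ℝ} (hx : Irrational x) {A : Set ℕ}
    (F : Finset ℝ) (r : ℝ → ℝ) (hr : ∀ t, 0 < r t)
    (hA : ∀ a ∈ A, Int.fract (x * a) ∈ ⋃ t ∈ F, Metric.ball t (r t)) :
    ∃ C : ℝ, ∀ n : ℕ, ((A ∩ Set.Iio n).ncard : ℝ) ≤ 8 * (∑ t ∈ F, r t) * n + C := by
  choose C hC using fun t => hx.exists_card_filter_dist_fract_lt_le t (hr t)
  refine ⟨∑ t ∈ F, C t, fun n => ?_⟩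
  have hsub : A ∩ Set.Iio n ⊆
      ↑(F.biUnion fun t => {a ∈ range n | dist (Int.fract (x * (a : ℕ))) t < r t}) := by
    rintro a ⟨ha, han⟩
    obtain ⟨t, ht, hat⟩ := Set.mem_iUnion₂.1 (hA a ha)
    exact mem_coe.2 (mem_biUnion.2 ⟨t, ht, mem_filter.2 ⟨Finset.mem_range.2 han, hat⟩⟩)
  calc ((A ∩ Set.Iio n).ncard : ℝ)
      ≤ ∑ t ∈ F, ((#{a ∈ range n | dist (Int.fract (x * (a : ℕ))) t < r t} : ℕ) : ℝ) := by
        rw [← Nat.cast_sum]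
        exact_mod_cast ((Set.ncard_le_ncard hsub).trans_eq (Set.ncard_coe_finset _)).trans
          card_biUnion_le
    _ ≤ ∑ t ∈ F, (8 * r t * n + C t) := sum_le_sum fun t _ => hC t n
    _ = 8 * (∑ t ∈ F, r t) * n + ∑ t ∈ F, C t := by
        rw [sum_add_distrib, mul_sum, sum_mul]

theorem tendsto_div_atTop_zero_of_forall_le_mul_add {f : ℕ → ℝ} (h0 : ∀ n, 0 ≤ f n)
    (h : ∀ ε > 0, ∃ C, ∀ n, f n ≤ ε * n + C) : Tendsto (fun n => f n / n) atTop (𝓝 0) := by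
  refine tendsto_order.2 ⟨fun a ha => Eventually.of_forall fun n =>
    ha.trans_le (div_nonneg (h0 n) n.cast_nonneg), fun a ha => ?_⟩
  obtain ⟨C, hC⟩ := h (a / 2) (half_pos ha)
  filter_upwards [(tendsto_const_div_atTop_nhds_zero_nat C).eventually
    (gt_mem_nhds (half_pos ha)), eventually_gt_atTop 0] with n hn hpos
  calc f n / n ≤ (a / 2 * n + C) / n := by gcongr; exact hC n
  _ = a / 2 + C / n := by field_simp
  _ < a := by linarith

/-- If `x` is irrational and `x∗A` is well-ordered by the usual order on `ℝ`,
then `A` has natural density `0`. -/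
theorem stmt_11 (x : ℝ) (hx : Irrational x) (A : Set ℕ)
    (hWF : ((fun a : ℕ => Int.fract (x * a)) '' A).IsWF) :
    Filter.Tendsto (fun n : ℕ => ((A ∩ Set.Iio n).ncard : ℝ) / n)
      Filter.atTop (nhds 0) := by
  have hcompact : IsCompact (closure ((fun a : ℕ => Int.fract (x * a)) '' A)) :=
    (isCompact_Icc (a := (0 : ℝ)) (b := 1)).closure_of_subset <| by
      rintro _ ⟨a, -, rfl⟩
      exact ⟨Int.fract_nonneg _, (Int.fract_lt_one _).le⟩
  refine tendsto_div_atTop_zero_of_forall_le_mul_add (fun n => by positivity) fun ε hε => ?_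
  obtain ⟨F, r, hr, hcover, hsum⟩ :=
    hcompact.exists_finset_ball_cover_sum_radius_le hWF.countable_closure
      (by positivity : 0 < ε / 8)
  obtain ⟨C, hC⟩ := hx.exists_ncard_inter_Iio_le F r hr
    fun a ha => hcover (subset_closure ⟨a, ha, rfl⟩)
  refine ⟨C, fun n => (hC n).trans ?_⟩
  gcongr
  linarith
end

section
/- Let x be irrational, let α be any countable linear order type, and let Ψ: ℕ → ℕ tend to infinity. Then there exists A ⊆ ℕ with |A ∩ [0,n)| ≤ Ψ(n) for all n such that x∗A = {x·a mod 1 : a ∈ A}, ordered as a subset of ℝ, has order type α. -/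
/-!
Dirichlet's approximation theorem gives a multiple `k x` within `ε` of an integer, and the
multiples of `k x` then step through `[0, 1)` with step less than `ε`; hence `a x mod 1`
visits every subinterval of `(0, 1)` for arbitrarily large `a`. Pick the `k`-th point `b k` of a
set `B` so late that `Ψ > k` from `b k` on and so that `x∗B` meets the `k`-th rational interval:
`B` is sparse and `x∗B` is a dense linear order. By Cantor, the countable order embeds into
`x∗B`, and `A` is the part of `B` that lands on the image of the embedding.
-/

open Set

theorem exists_nat_ge_fract_mul_mem_Ioo_of_lt_sub {y u v : ℝ} (hy : 0 < y) (hyuv : y < v - u)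
    (hu : 0 ≤ u) (hv : v ≤ 1) (N : ℕ) : ∃ j ≥ N, Int.fract (j * y) ∈ Ioo u v := by
  obtain ⟨c, huc, hcv⟩ : ∃ c, u < c ∧ c + y < v := ⟨(u + v - y) / 2, by linarith, by linarith⟩
  set p : ℕ := ⌈N * y⌉₊
  set j : ℕ := ⌈(p + c) / y⌉₊
  have hNp : N * y ≤ p := Nat.le_ceil _
  have hc : 0 ≤ (p + c) / y := div_nonneg (by linarith [p.cast_nonneg (α := ℝ)]) hy.le
  have hlow : p + c ≤ j * y := (div_le_iff₀ hy).mp (Nat.le_ceil _)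
  have hup : j * y < p + c + y :=
    calc (j : ℝ) * y < ((p + c) / y + 1) * y := by gcongr; exact Nat.ceil_lt_add_one hc
      _ = p + c + y := by field_simp
  have hfract : Int.fract (j * y) = j * y - p :=
    Int.fract_eq_iff.mpr ⟨by linarith, by linarith, p, by push_cast; ring⟩
  refine ⟨j, ?_, ?_⟩
  · exact_mod_cast le_of_mul_le_mul_right (hNp.trans (by linarith) : (N : ℝ) * y ≤ j * y) hy
  · rw [hfract]
    constructor <;> linarith

theorem Irrational.exists_nat_ge_fract_mul_mem_Ioo {x : ℝ} (hx : Irrational x) {u v : ℝ}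
    (hu : 0 ≤ u) (huv : u < v) (hv : v ≤ 1) (N : ℕ) :
    ∃ a ≥ N, Int.fract (x * a) ∈ Ioo u v := by
  obtain ⟨n, hn⟩ := exists_nat_gt (1 / (v - u))
  have hn0 : 0 < n := Nat.cast_pos.mp (lt_trans (by simpa using huv) hn)
  obtain ⟨k, hk0, -, hk⟩ := Real.exists_nat_abs_mul_sub_round_le x hn0
  set y := k * x - round (k * x)
  have hy0 : y ≠ 0 := ((hx.natCast_mul hk0.ne').sub_intCast _).ne_zero
  have hyuv : |y| < v - u := by
    refine hk.trans_lt ?_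
    rw [div_lt_iff₀ (by positivity)]
    rw [div_lt_iff₀ (sub_pos.mpr huv)] at hn
    nlinarith
  have hmul : ∀ j : ℕ, Int.fract (x * ↑(j * k)) = Int.fract (j * y) := by
    intro j
    rw [show x * ↑(j * k) = j * y + ↑(j * round (k * x)) by push_cast; ring,
      Int.fract_add_intCast]
  have hjk : ∀ j ≥ N, N ≤ j * k := fun j hj => hj.trans (Nat.le_mul_of_pos_right j hk0)
  rcases hy0.lt_or_gt with hneg | hpos
  · -- `fract (j * y) = 1 - fract (j * |y|)`, so aim `j * |y|` at the reflected interval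
    rw [abs_of_neg hneg] at hyuv
    obtain ⟨j, hjN, hj⟩ := exists_nat_ge_fract_mul_mem_Ioo_of_lt_sub (neg_pos.mpr hneg)
      (u := 1 - v) (v := 1 - u) (by linarith) (by linarith) (by linarith) N
    refine ⟨j * k, hjk j hjN, ?_⟩
    rw [hmul, show (j : ℝ) * y = -(j * -y) by ring, Int.fract_neg (by linarith [hj.1])]
    constructor <;> linarith [hj.1, hj.2]
  · rw [abs_of_pos hpos] at hyuv
    obtain ⟨j, hjN, hj⟩ := exists_nat_ge_fract_mul_mem_Ioo_of_lt_sub hpos hyuv hu hv N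
    exact ⟨j * k, hjk j hjN, hmul j ▸ hj⟩

theorem Irrational.exists_seq_ge_forall_fract_mul_mem_Ioo {x : ℝ} (hx : Irrational x)
    (M : ℕ → ℕ) : ∃ b : ℕ → ℕ, (∀ k, M k ≤ b k) ∧ ∀ u v : ℝ, 0 ≤ u → u < v → v ≤ 1 →
      (range (fun k => Int.fract (x * b k)) ∩ Ioo u v).Nonempty := by
  obtain ⟨g, hg⟩ := exists_surjective_nat (ℚ × ℚ)
  have hstep : ∀ k, ∃ a ≥ M k, 0 ≤ ((g k).1 : ℝ) → ((g k).1 : ℝ) < (g k).2 →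
      ((g k).2 : ℝ) ≤ 1 → Int.fract (x * a) ∈ Ioo ((g k).1 : ℝ) (g k).2 := by
    intro k
    by_cases h : 0 ≤ ((g k).1 : ℝ) ∧ ((g k).1 : ℝ) < (g k).2 ∧ ((g k).2 : ℝ) ≤ 1
    · obtain ⟨a, ha, hfa⟩ := hx.exists_nat_ge_fract_mul_mem_Ioo h.1 h.2.1 h.2.2 (M k)
      exact ⟨a, ha, fun _ _ _ => hfa⟩
    · exact ⟨M k, le_rfl, fun h₁ h₂ h₃ => (h ⟨h₁, h₂, h₃⟩).elim⟩
  choose b hbM hb using hstep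
  refine ⟨b, hbM, fun u v hu huv hv => ?_⟩
  obtain ⟨p, hup, hpv⟩ := exists_rat_btwn huv
  obtain ⟨q, hpq, hqv⟩ := exists_rat_btwn hpv
  obtain ⟨k, hk⟩ := hg (p, q)
  have hbk := hb k
  rw [hk] at hbk
  exact ⟨_, mem_range_self k,
    Ioo_subset_Ioo hup.le hqv.le (hbk (hu.trans hup.le) hpq (hqv.le.trans hv))⟩

theorem exists_orderEmbedding_range_subset_of_forall_Ioo (L : Type*) [LinearOrder L]
    [Countable L] {S : Set ℝ} (hS01 : S ⊆ Ico 0 1)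
    (hS : ∀ u v : ℝ, 0 ≤ u → u < v → v ≤ 1 → (S ∩ Ioo u v).Nonempty) :
    ∃ ψ : L ↪o ℝ, range ψ ⊆ S := by
  have : DenselyOrdered S := ⟨fun s t hst => by
    obtain ⟨r, hrS, hr⟩ := hS s t (hS01 s.2).1 hst (hS01 t.2).2.le
    exact ⟨⟨r, hrS⟩, hr⟩⟩
  obtain ⟨r₁, hr₁S, hr₁⟩ := hS 0 (1 / 2) le_rfl (by norm_num) (by norm_num)
  obtain ⟨r₂, hr₂S, hr₂⟩ := hS (1 / 2) 1 (by norm_num) (by norm_num) le_rfl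
  have : Nontrivial S :=
    nontrivial_of_ne ⟨r₁, hr₁S⟩ ⟨r₂, hr₂S⟩ fun h => by
      have : r₁ = r₂ := congrArg Subtype.val h
      linarith [hr₁.2, hr₂.1]
  obtain ⟨φ⟩ := Order.embedding_from_countable_to_dense L S
  exact ⟨φ.trans (OrderEmbedding.subtype _), by rintro _ ⟨l, rfl⟩; exact (φ l).2⟩

theorem ncard_range_inter_Iio_le {b Ψ : ℕ → ℕ} (n : ℕ) (hb : ∀ k, b k < n → k < Ψ n) :
    (range b ∩ Iio n).ncard ≤ Ψ n :=
  calc (range b ∩ Iio n).ncard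
      ≤ (b '' Iio (Ψ n)).ncard := by
        refine ncard_le_ncard ?_ ((finite_Iio _).image _)
        rintro _ ⟨⟨k, rfl⟩, hk⟩
        exact ⟨k, hb k hk, rfl⟩
    _ ≤ (Iio (Ψ n)).ncard := ncard_image_le (finite_Iio _)
    _ = Ψ n := by rw [← Finset.coe_Iio, ncard_coe_finset, Nat.card_Iio]

/-- For irrational `x`, any countable linear order type `α`, and any `Ψ : ℕ → ℕ`
tending to infinity, there is `A ⊆ ℕ` with `|A ∩ [0,n)| ≤ Ψ(n)` for all `n`
such that `x∗A` has order type `α`. -/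
theorem stmt_12 (x : ℝ) (hx : Irrational x) (L : Type) [LinearOrder L] [Countable L]
    (Ψ : ℕ → ℕ) (hΨ : Filter.Tendsto Ψ Filter.atTop Filter.atTop) :
    ∃ A : Set ℕ, (∀ n : ℕ, (A ∩ Set.Iio n).ncard ≤ Ψ n) ∧
      Nonempty ((↥((fun a : ℕ => Int.fract (x * a)) '' A)) ≃o L) := by
  choose M hM using fun k => Filter.eventually_atTop.mp (hΨ.eventually_gt_atTop k)
  obtain ⟨b, hbM, hb⟩ := hx.exists_seq_ge_forall_fract_mul_mem_Ioo M
  set f : ℕ → ℝ := fun a => Int.fract (x * a)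
  obtain ⟨ψ, hψ⟩ := exists_orderEmbedding_range_subset_of_forall_Ioo L
    (by rintro _ ⟨k, rfl⟩; exact ⟨Int.fract_nonneg _, Int.fract_lt_one _⟩) hb
  refine ⟨range b ∩ f ⁻¹' range ψ, fun n => ?_, ?_⟩
  · calc _ ≤ (range b ∩ Iio n).ncard :=
          ncard_le_ncard (inter_subset_inter_left _ inter_subset_left)
            ((finite_Iio n).inter_of_right _)
      _ ≤ Ψ n := ncard_range_inter_Iio_le n fun k hk => hM k n ((hbM k).trans hk.le)
  · rw [image_inter_preimage, inter_eq_right.mpr (hψ.trans (range_comp f b).subset)]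
    exact ⟨ψ.orderIso.symm⟩
end

section
/- Let b ≥ 2 and let W = w_0 w_1 w_2 ⋯ be an infinite word over the alphabet {0, 1, ..., b−1} that is not eventually periodic. Let C(n) be the number of words of length n that occur as factors of W at infinitely many positions. Then C(n) is unbounded as n → ∞. -/
/-!
Call a factor recurrent if it occurs at infinitely many positions. Every recurrent factor of
length `n` extends to a recurrent factor of length `n + 1`, so truncation maps the recurrent
factors of length `n + 1` onto those of length `n`. If for some `n ≥ 1` this map were a
bijection, every recurrent factor of length `n` would have a unique recurrent extension. Since
from some position on every window of `W` is recurrent, the length-`n` window at position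
`j + 1` would then be a function of the one at position `j`: a deterministic dynamics on a
finite set, hence eventually periodic, and so would be `W`. Hence the number of recurrent
factors increases strictly with `n ≥ 1`.
-/

open Filter

namespace InfiniteWord

variable {α : Type*}

def window (W : ℕ → α) (n j : ℕ) : Fin n → α := fun i => W (j + i)

def recurrentFactors (W : ℕ → α) (n : ℕ) : Set (Fin n → α) :=
  {u | ∃ᶠ j in atTop, window W n j = u}

def EventuallyPeriodic (W : ℕ → α) : Prop :=
  ∃ N p : ℕ, 0 < p ∧ ∀ k, N ≤ k → W (k + p) = W k

variable (W : ℕ → α)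

lemma window_succ (n j : ℕ) : window W (n + 1) j = Fin.snoc (window W n j) (W (j + n)) := by
  funext i
  refine Fin.lastCases ?_ (fun i => ?_) i <;> simp [window]

lemma tail_window_succ (n j : ℕ) : Fin.tail (window W (n + 1) j) = window W n (j + 1) := by
  funext i
  simp only [window, Fin.tail, Fin.val_succ]
  ac_rfl

lemma recurrentFactors_eq (n : ℕ) :
    recurrentFactors W n = {u | {j : ℕ | ∀ i : Fin n, W (j + i) = u i}.Infinite} := by
  ext u
  simp [recurrentFactors, window, ← Nat.frequently_atTop_iff_infinite, funext_iff]

lemma EventuallyPeriodic.of_window {n : ℕ} (hn : 0 < n) (h : EventuallyPeriodic (window W n)) :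
    EventuallyPeriodic W := by
  obtain ⟨N, p, hp, hper⟩ := h
  exact ⟨N, p, hp, fun k hk => by simpa [window] using congrFun (hper k hk) ⟨0, hn⟩⟩

lemma eventuallyPeriodic_of_eq_imp_succ_eq {β : Type*} [Finite β] (g : ℕ → β) (N : ℕ)
    (hstep : ∀ j j', N ≤ j → N ≤ j' → g j = g j' → g (j + 1) = g (j' + 1)) :
    EventuallyPeriodic g := by
  obtain ⟨j₁, hj₁, j₂, hj₂, hlt, heq⟩ :=
    (Set.Ici_infinite N).exists_lt_map_eq_of_mapsTo (Set.mapsTo_univ g _) Set.finite_univ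
  rw [Set.mem_Ici] at hj₁ hj₂
  have hshift : ∀ t, g (j₁ + t) = g (j₂ + t) := by
    intro t
    induction t with
    | zero => exact heq
    | succ t ih => exact hstep (j₁ + t) (j₂ + t) (by omega) (by omega) ih
  refine ⟨j₁, j₂ - j₁, by omega, fun k hk => ?_⟩
  obtain ⟨t, rfl⟩ := Nat.exists_eq_add_of_le hk
  rw [show j₁ + t + (j₂ - j₁) = j₂ + t by omega]
  exact (hshift t).symm

variable [Finite α]

lemma eventually_window_mem_recurrentFactors (n : ℕ) :
    ∀ᶠ j in atTop, window W n j ∈ recurrentFactors W n := by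
  have h : ∀ᶠ j in atTop, ∀ u, u ∉ recurrentFactors W n → window W n j ≠ u :=
    eventually_all.2 fun u => eventually_imp_distrib_left.2 fun hu => not_frequently.1 hu
  exact h.mono fun j hj => by_contra fun hnot => hj _ hnot rfl

lemma exists_snoc_mem_recurrentFactors {n : ℕ} {u : Fin n → α}
    (hu : u ∈ recurrentFactors W n) : ∃ x, Fin.snoc u x ∈ recurrentFactors W (n + 1) :=
  frequently_exists.1 <| hu.mono fun j hj => ⟨W (j + n), by rw [window_succ, hj]⟩

lemma recurrentFactors_subset_image_init (n : ℕ) :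
    recurrentFactors W n ⊆ Fin.init '' recurrentFactors W (n + 1) := fun u hu =>
  let ⟨x, hx⟩ := exists_snoc_mem_recurrentFactors W hu
  ⟨_, hx, by simp only [Fin.init_snoc]⟩

lemma eventuallyPeriodic_of_injOn_init {n : ℕ} (hn : 0 < n)
    (hinj : Set.InjOn Fin.init (recurrentFactors W (n + 1))) : EventuallyPeriodic W := by
  obtain ⟨N, hN⟩ := eventually_atTop.1 (eventually_window_mem_recurrentFactors W (n + 1))
  refine .of_window W hn (eventuallyPeriodic_of_eq_imp_succ_eq _ N fun j j' hj hj' h => ?_)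
  have hsucc : window W (n + 1) j = window W (n + 1) j' :=
    hinj (hN j hj) (hN j' hj') (by simp only [window_succ, Fin.init_snoc, h])
  rw [← tail_window_succ, ← tail_window_succ, hsucc]

lemma ncard_recurrentFactors_lt_succ (hW : ¬EventuallyPeriodic W) {n : ℕ} (hn : 0 < n) :
    (recurrentFactors W n).ncard < (recurrentFactors W (n + 1)).ncard := by
  by_contra! hle
  have himage : (Fin.init '' recurrentFactors W (n + 1)).ncard =
      (recurrentFactors W (n + 1)).ncard :=
    le_antisymm (Set.ncard_image_le (Set.toFinite _))
      (hle.trans (Set.ncard_le_ncard (recurrentFactors_subset_image_init W n)))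
  exact hW (eventuallyPeriodic_of_injOn_init W hn (Set.injOn_of_ncard_image_eq himage))

lemma succ_le_ncard_recurrentFactors (hW : ¬EventuallyPeriodic W) :
    ∀ n, n + 1 ≤ (recurrentFactors W (n + 1)).ncard
  | 0 =>
    let ⟨_, hj⟩ := (eventually_window_mem_recurrentFactors W 1).exists
    (Set.ncard_pos (Set.toFinite _)).2 ⟨_, hj⟩
  | n + 1 =>
    (succ_le_ncard_recurrentFactors hW n).trans_lt (ncard_recurrentFactors_lt_succ W hW n.succ_pos)

end InfiniteWord

open InfiniteWord in
theorem stmt_15_general (b : ℕ) (W : ℕ → Fin b)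
    (hnp : ¬∃ N p : ℕ, 0 < p ∧ ∀ k, N ≤ k → W (k + p) = W k) :
    ∀ m : ℕ, ∃ n : ℕ,
      m ≤ {u : Fin n → Fin b | {j : ℕ | ∀ i : Fin n, W (j + i) = u i}.Infinite}.ncard := by
  intro m
  refine ⟨m + 1, ?_⟩
  rw [← recurrentFactors_eq]
  exact m.le_succ.trans (succ_le_ncard_recurrentFactors W hnp m)

/-- If `W` is an infinite word over `{0,…,b-1}` that is not eventually periodic, then
the number `C(n)` of length-`n` factors occurring at infinitely many positions of `W`
is unbounded. -/
theorem stmt_15 (b : ℕ) (hb : 2 ≤ b) (W : ℕ → Fin b)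
    (hnp : ¬∃ N p : ℕ, 0 < p ∧ ∀ k, N ≤ k → W (k + p) = W k) :
    ∀ m : ℕ, ∃ n : ℕ,
      m ≤ {u : Fin n → Fin b | {j : ℕ | ∀ i : Fin n, W (j + i) = u i}.Infinite}.ncard :=
  stmt_15_general b W hnp
end

section
/- Let b ≥ 2 and let W be an infinite word over {0, 1, ..., b−1} that is not eventually periodic. Equip the set of infinite words with the lexicographic order. Then the set of shifts {σ^k(W) : k ∈ ℕ} has infinitely many limit points (with respect to the product topology / the metric d(U,V) = 2^{−i} where i is the first position of disagreement). Consequently, if {σ^k(W) : k ∈ ℕ} is well-ordered by the lexicographic order, its order type is at least ω². -/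
/-- Lexicographic (strict) order on infinite words. -/
def lexLt {b : ℕ} (U V : ℕ → Fin b) : Prop :=
  ∃ i : ℕ, U i < V i ∧ ∀ j < i, U j = V j

/-- `L` is a limit point of a set `S` of infinite words (product topology):
every basic neighborhood of `L` contains a point of `S` other than `L`. -/
def IsLimitWord {b : ℕ} (S : Set (ℕ → Fin b)) (L : ℕ → Fin b) : Prop :=
  ∀ m : ℕ, ∃ V ∈ S, V ≠ L ∧ ∀ i < m, V i = L i

/-- The shift of a word by `k`. -/
def shiftW {b : ℕ} (k : ℕ) (W : ℕ → Fin b) : ℕ → Fin b := fun n => W (n + k)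

namespace Stmt16

variable {b : ℕ}

/-- window of length n at position k -/
def win (W : ℕ → Fin b) (n k : ℕ) : Fin n → Fin b := fun i => W (i.1 + k)

def occ (W : ℕ → Fin b) (n : ℕ) (w : Fin n → Fin b) : Set ℕ := {k | win W n k = w}

def RecW (W : ℕ → Fin b) (n : ℕ) (w : Fin n → Fin b) : Prop := (occ W n w).Infinite

theorem rec_nonempty (W : ℕ → Fin b) (n : ℕ) : ∃ w, RecW W n w := by
  obtain ⟨w, hw⟩ := Finite.exists_infinite_fiber (win W n)
  exact ⟨w, Set.infinite_coe_iff.mp hw⟩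

theorem rec_ext {W : ℕ → Fin b} {n : ℕ} {w : Fin n → Fin b} (h : RecW W n w) :
    ∃ a, RecW W (n+1) (Fin.snoc w a) := by
  haveI : Infinite (occ W n w) := Set.infinite_coe_iff.mpr h
  obtain ⟨a, ha⟩ := Finite.exists_infinite_fiber (fun k : occ W n w => W (n + k.1))
  refine ⟨a, Set.infinite_of_injective_forall_mem
    (f := fun x : (fun k : occ W n w => W (n + k.1)) ⁻¹' {a} => x.1.1) ?_ ?_⟩
  · intro x y hxy
    exact Subtype.ext (Subtype.ext hxy)
  · rintro ⟨⟨k, hk⟩, hk2⟩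
    simp only [Set.mem_preimage, Set.mem_singleton_iff] at hk2
    show win W (n+1) k = Fin.snoc w a
    funext i
    refine Fin.lastCases ?_ ?_ i
    · simp only [Fin.snoc_last, win, Fin.val_last]
      exact hk2
    · intro j
      simp only [Fin.snoc_castSucc, win, Fin.coe_castSucc]
      have := congrFun hk j
      simpa [win] using this

theorem rec_init {W : ℕ → Fin b} {n : ℕ} {w : Fin (n+1) → Fin b} (h : RecW W (n+1) w) :
    RecW W n (Fin.init w) := by
  refine h.mono ?_
  intro k hk
  show win W n k = Fin.init w
  funext j
  have := congrFun hk (Fin.castSucc j)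
  simpa [win, Fin.init] using this

open Classical in
/-- a choice of recurrent extension letter (junk value `W 0` if not recurrent) -/
noncomputable def extL (W : ℕ → Fin b) (n : ℕ) (w : Fin n → Fin b) : Fin b :=
  if h : RecW W n w then (rec_ext h).choose else W 0

theorem extL_spec {W : ℕ → Fin b} {n : ℕ} {w : Fin n → Fin b} (h : RecW W n w) :
    RecW W (n+1) (Fin.snoc w (extL W n w)) := by
  classical
  rw [extL]
  rw [dif_pos h]
  exact (rec_ext h).choose_spec

/-- iterated extension starting from w -/
noncomputable def branchAux (W : ℕ → Fin b) (n : ℕ) (w : Fin n → Fin b) :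
    (m : ℕ) → Fin (n + m) → Fin b
  | 0 => w
  | (m+1) => Fin.snoc (branchAux W n w m) (extL W (n+m) (branchAux W n w m))

theorem branchAux_rec {W : ℕ → Fin b} {n : ℕ} {w : Fin n → Fin b} (h : RecW W n w) :
    ∀ m, RecW W (n+m) (branchAux W n w m)
  | 0 => h
  | (m+1) => extL_spec (branchAux_rec h m)

theorem branchAux_stable (W : ℕ → Fin b) (n : ℕ) (w : Fin n → Fin b)
    {m m' : ℕ} (hmm : m ≤ m') (i : ℕ) (h : i < n + m) (h' : i < n + m') :
    branchAux W n w m' ⟨i, h'⟩ = branchAux W n w m ⟨i, h⟩ := by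
  induction m', hmm using Nat.le_induction with
  | base => rfl
  | succ m' hmm ih =>
    have hi : i < n + m' := by omega
    have heq : branchAux W n w (m'+1) = Fin.snoc (branchAux W n w m')
        (extL W (n+m') (branchAux W n w m')) := rfl
    have hcast : (⟨i, h'⟩ : Fin (n + (m'+1))) = Fin.castSucc ⟨i, hi⟩ := rfl
    rw [heq, hcast, Fin.snoc_castSucc]
    exact ih hi

/-- the infinite branch through w -/
noncomputable def branch (W : ℕ → Fin b) (n : ℕ) (w : Fin n → Fin b) : ℕ → Fin b :=
  fun i => branchAux W n w (i+1) ⟨i, by omega⟩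

theorem branch_eq (W : ℕ → Fin b) (n : ℕ) (w : Fin n → Fin b)
    {m i : ℕ} (h : i < n + m) : branch W n w i = branchAux W n w m ⟨i, h⟩ := by
  rcases le_total (i+1) m with hm | hm
  · exact (branchAux_stable W n w hm i (by omega) h).symm
  · exact branchAux_stable W n w hm i h (by omega)

theorem branch_prefix (W : ℕ → Fin b) (n : ℕ) (w : Fin n → Fin b)
    {i : ℕ} (h : i < n) : branch W n w i = w ⟨i, h⟩ :=
  branch_eq W n w (m := 0) h

theorem branch_rec {W : ℕ → Fin b} {n : ℕ} {w : Fin n → Fin b} (h : RecW W n w) (M : ℕ) :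
    {k : ℕ | ∀ i < M, W (i + k) = branch W n w i}.Infinite := by
  refine (branchAux_rec h M).mono ?_
  intro k hk i hi
  have h2 : i < n + M := by omega
  rw [branch_eq W n w h2]
  exact congrFun hk ⟨i, h2⟩

noncomputable def snocExt (W : ℕ → Fin b) (n : ℕ) (w : Fin n → Fin b) : Fin (n+1) → Fin b :=
  Fin.snoc w (extL W n w)

theorem snocExt_rec {W : ℕ → Fin b} {n : ℕ} {w : Fin n → Fin b} (h : RecW W n w) :
    RecW W (n+1) (snocExt W n w) := extL_spec h

/-- the set of shifts -/
def SS (W : ℕ → Fin b) : Set (ℕ → Fin b) := {V | ∃ k : ℕ, V = shiftW k W}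

def NotEP (W : ℕ → Fin b) : Prop := ¬∃ N p : ℕ, 0 < p ∧ ∀ k, N ≤ k → W (k + p) = W k

theorem shift_ne {W : ℕ → Fin b} (hnp : NotEP W) {k j : ℕ} (h : k ≠ j) :
    shiftW k W ≠ shiftW j W := by
  have key : ∀ k j : ℕ, k < j → shiftW k W = shiftW j W → False := by
    intro k j hkj he
    refine hnp ⟨k, j - k, by omega, fun m hm => ?_⟩
    have h1 := congrFun he (m - k)
    simp only [shiftW] at h1
    have e1 : m - k + k = m := by omega
    have e2 : m - k + j = m + (j - k) := by omega
    rw [e1, e2] at h1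
    exact h1.symm
  rcases h.lt_or_gt with h' | h'
  · exact fun he => key _ _ h' he
  · exact fun he => key _ _ h' he.symm

theorem branch_limit {W : ℕ → Fin b} (hnp : NotEP W) {n : ℕ} {w : Fin n → Fin b}
    (h : RecW W n w) : IsLimitWord (SS W) (branch W n w) := by
  intro m
  obtain ⟨k₁, hk₁, k₂, hk₂, hne⟩ := (branch_rec h m).nontrivial
  by_cases h1 : shiftW k₁ W = branch W n w
  · refine ⟨shiftW k₂ W, ⟨k₂, rfl⟩, ?_, fun i hi => hk₂ i hi⟩
    intro h2
    exact shift_ne hnp hne (h1.trans h2.symm)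
  · exact ⟨shiftW k₁ W, ⟨k₁, rfl⟩, h1, fun i hi => hk₁ i hi⟩

theorem part1 {W : ℕ → Fin b} (hnp : NotEP W) : {L | IsLimitWord (SS W) L}.Infinite := by
  by_contra hinf
  have hfin : {L | IsLimitWord (SS W) L}.Finite := Set.not_infinite.mp hinf
  set T : Set (ℕ → Fin b) := {L | IsLimitWord (SS W) L} with hT
  set F : (n : ℕ) → Set (Fin n → Fin b) := fun n => {w | RecW W n w} with hF
  set c : ℕ → ℕ := fun n => (F n).ncard with hc
  have hFfin : ∀ n, (F n).Finite := fun n => Set.toFinite _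
  -- extension injection
  have hsnocinj : ∀ n : ℕ, Set.InjOn (snocExt W n) (F n) := by
    intro n w hw w' hw' heq
    have := congrArg Fin.init heq
    simpa [snocExt, Fin.init_snoc] using this
  have hsnocim : ∀ n : ℕ, (snocExt W n) '' (F n) ⊆ F (n+1) := by
    rintro n _ ⟨w, hw, rfl⟩
    exact snocExt_rec hw
  have hmono : ∀ n, c n ≤ c (n+1) := by
    intro n
    calc c n = ((snocExt W n) '' (F n)).ncard :=
          (Set.ncard_image_of_injOn (hsnocinj n)).symm
      _ ≤ c (n+1) := Set.ncard_le_ncard (hsnocim n) (hFfin (n+1))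
  -- branches give limit points
  have hbd : ∀ n, c n ≤ T.ncard := by
    intro n
    have hinj : Set.InjOn (fun w => branch W n w) (F n) := by
      intro w hw w' hw' heq
      funext i
      have h1 := branch_prefix W n w i.2
      have h2 := branch_prefix W n w' i.2
      rw [Fin.eta] at h1 h2
      simp only at heq
      rw [← h1, ← h2, heq]
    have him : (fun w => branch W n w) '' (F n) ⊆ T := by
      rintro _ ⟨w, hw, rfl⟩
      exact branch_limit hnp hw
    calc c n = ((fun w => branch W n w) '' (F n)).ncard :=
          (Set.ncard_image_of_injOn hinj).symm
      _ ≤ T.ncard := Set.ncard_le_ncard him hfin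
  have hc1 : 1 ≤ c 1 := by
    obtain ⟨w, hw⟩ := rec_nonempty W 1
    have : (F 1).Nonempty := ⟨w, hw⟩
    exact (Set.ncard_pos (hFfin 1)).mpr this
  -- some level with equal consecutive cardinalities
  have hstab : ∃ n0, 1 ≤ n0 ∧ c n0 = c (n0+1) := by
    by_contra hcon
    push_neg at hcon
    have grow : ∀ t : ℕ, 1 + t ≤ c (1+t) := by
      intro t
      induction t with
      | zero => simpa using hc1
      | succ t ih =>
        have h1 : c (1+t) < c (1+t+1) :=
          lt_of_le_of_ne (hmono (1+t)) (hcon (1+t) (by omega))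
        have e : (1+(t+1)) = (1+t)+1 := by omega
        rw [e]
        omega
    have := grow T.ncard
    have := hbd (1 + T.ncard)
    omega
  obtain ⟨n0, hn0, hceq⟩ := hstab
  -- image of extension map is everything: unique recurrent extensions
  have himgeq : (snocExt W n0) '' (F n0) = F (n0+1) := by
    refine Set.eq_of_subset_of_ncard_le (hsnocim n0) ?_ (hFfin (n0+1))
    rw [Set.ncard_image_of_injOn (hsnocinj n0)]
    exact hceq.ge
  have huniq : ∀ w, RecW W n0 w → ∀ a, RecW W (n0+1) (Fin.snoc w a) → a = extL W n0 w := by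
    intro w hw a ha
    have hmem : Fin.snoc w a ∈ F (n0+1) := ha
    rw [← himgeq] at hmem
    obtain ⟨w'', hw'', heq⟩ := hmem
    have h1 : w'' = w := by
      have := congrArg Fin.init heq
      simpa [snocExt, Fin.init_snoc] using this
    subst h1
    have h2 := congrArg (fun q => q (Fin.last n0)) heq
    simpa [snocExt, Fin.snoc_last] using h2.symm
  -- beyond some point all windows are recurrent
  have hbadfin : {k | ¬ RecW W (n0+1) (win W (n0+1) k)}.Finite := by
    have hsub : {k | ¬ RecW W (n0+1) (win W (n0+1) k)} ⊆
        ⋃ v ∈ {v : Fin (n0+1) → Fin b | ¬ RecW W (n0+1) v}, occ W (n0+1) v := by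
      intro k hk
      exact Set.mem_biUnion hk rfl
    refine Set.Finite.subset (Set.Finite.biUnion (Set.toFinite _) ?_) hsub
    intro v hv
    exact Set.not_infinite.mp hv
  obtain ⟨N, hN⟩ := hbadfin.bddAbove
  have hgood : ∀ k, N + 1 ≤ k → RecW W (n0+1) (win W (n0+1) k) := by
    intro k hk
    by_contra hbad
    have := hN hbad
    omega
  have hwin_init : ∀ k, Fin.init (win W (n0+1) k) = win W n0 k := by
    intro k
    funext j
    simp [Fin.init, win]
  have hwrec : ∀ k, N + 1 ≤ k → RecW W n0 (win W n0 k) := by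
    intro k hk
    have := rec_init (hgood k hk)
    rwa [hwin_init] at this
  have hsnocwin : ∀ k, Fin.snoc (win W n0 k) (W (n0 + k)) = win W (n0+1) k := by
    intro k
    funext i
    refine Fin.lastCases ?_ ?_ i
    · simp [Fin.snoc_last, win]
    · intro j
      simp [Fin.snoc_castSucc, win]
  have hdet : ∀ k, N + 1 ≤ k → W (n0 + k) = extL W n0 (win W n0 k) := by
    intro k hk
    refine huniq _ (hwrec k hk) _ ?_
    rw [hsnocwin]
    exact hgood k hk
  -- deterministic evolution of windows
  set T0 : (Fin n0 → Fin b) → (Fin n0 → Fin b) :=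
    fun w i => if h : i.1 + 1 < n0 then w ⟨i.1+1, h⟩ else extL W n0 w with hT0
  set s : ℕ → Fin n0 → Fin b := fun t => win W n0 (N+1+t) with hs
  have hstep : ∀ t, s (t+1) = T0 (s t) := by
    intro t
    funext i
    show win W n0 (N+1+(t+1)) i = _
    by_cases h : i.1 + 1 < n0
    · simp only [hT0, dif_pos h, hs, win]
      exact congrArg W (by omega)
    · have hi : i.1 + 1 = n0 := by omega
      simp only [hT0, dif_neg h, hs]
      rw [← hdet (N+1+t) (by omega)]
      show W (i.1 + (N+1+(t+1))) = W (n0 + (N+1+t))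
      exact congrArg W (by omega)
  obtain ⟨t₁, t₂, hne, heq⟩ := Finite.exists_ne_map_eq_of_infinite s
  have key : ∀ u v : ℕ, u < v → s u = s v → False := by
    intro u v huv hsuv
    have hshift : ∀ t, s (u+t) = s (v+t) := by
      intro t
      induction t with
      | zero => simpa using hsuv
      | succ t ih =>
        have e1 : u + (t+1) = (u+t) + 1 := by omega
        have e2 : v + (t+1) = (v+t) + 1 := by omega
        rw [e1, e2, hstep, hstep, ih]
    refine hnp ⟨N+1+u, v - u, by omega, fun k hk => ?_⟩
    have ht := hshift (k - (N+1+u))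
    have h0 := congrFun ht ⟨0, by omega⟩
    simp only [hs, win] at h0
    have e1 : (0:ℕ) + (N+1+(u + (k - (N+1+u)))) = k := by omega
    have e2 : (0:ℕ) + (N+1+(v + (k - (N+1+u)))) = k + (v - u) := by omega
    rw [e1, e2] at h0
    exact h0.symm
  rcases hne.lt_or_gt with h | h
  · exact key t₁ t₂ h heq
  · exact key t₂ t₁ h heq.symm

theorem lexLt_trans {U V X : ℕ → Fin b} (h1 : lexLt U V) (h2 : lexLt V X) : lexLt U X := by
  obtain ⟨i, hi, hib⟩ := h1
  obtain ⟨j, hj, hjb⟩ := h2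
  rcases lt_trichotomy i j with h | h | h
  · exact ⟨i, by rw [← hjb i h]; exact hi, fun m hm => (hib m hm).trans (hjb m (by omega))⟩
  · subst h
    exact ⟨i, hi.trans hj, fun m hm => (hib m hm).trans (hjb m hm)⟩
  · exact ⟨j, by rw [hib j h]; exact hj, fun m hm => (hib m (by omega)).trans (hjb m hm)⟩

theorem lexLt_total {U V : ℕ → Fin b} (h : U ≠ V) : lexLt U V ∨ lexLt V U := by
  have hex : ∃ i, U i ≠ V i := by
    by_contra hc
    push_neg at hc
    exact h (funext hc)
  classical
  let i := Nat.find hex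
  have hne : U i ≠ V i := Nat.find_spec hex
  have hag : ∀ j < i, U j = V j := fun j hj => by
    by_contra hc
    exact Nat.find_min hex hj hc
  rcases hne.lt_or_gt with h' | h'
  · exact Or.inl ⟨i, h', hag⟩
  · exact Or.inr ⟨i, h', fun j hj => (hag j hj).symm⟩

theorem lexLt_ne {U V : ℕ → Fin b} (h : lexLt U V) : U ≠ V := by
  obtain ⟨i, hi, -⟩ := h
  intro he
  rw [he] at hi
  exact lt_irrefl _ hi

theorem no_descend {W : ℕ → Fin b} (hwf : (SS W).WellFoundedOn lexLt)
    (g : ℕ → ℕ → Fin b) (hg : ∀ t, g t ∈ SS W) (hd : ∀ t, lexLt (g (t+1)) (g t)) : False := by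
  have hWF : WellFounded fun a b : (SS W) => lexLt a.1 b.1 := hwf
  have hacc : ∀ x : SS W, Acc (fun a b : (SS W) => lexLt a.1 b.1) x → ∀ t, (⟨g t, hg t⟩ : SS W) ≠ x := by
    intro x hx
    induction hx with
    | intro y hy ih =>
      intro t het
      exact ih ⟨g (t+1), hg (t+1)⟩ (by rw [← het] at *; exact hd t) (t+1) rfl
  exact hacc ⟨g 0, hg 0⟩ (hWF.apply _) 0 rfl

/-- under well-foundedness, every limit point is approached from below arbitrarily closely -/
theorem approx_below {W : ℕ → Fin b} (hwf : (SS W).WellFoundedOn lexLt)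
    {L : ℕ → Fin b} (hL : IsLimitWord (SS W) L) (m : ℕ) :
    ∃ V, V ∈ SS W ∧ lexLt V L ∧ ∀ i < m, V i = L i := by
  by_contra hcon
  push_neg at hcon
  -- every close approximant is above L
  have hA : ∀ t : ℕ, ∃ V, V ∈ SS W ∧ lexLt L V ∧ ∀ i < m + t, V i = L i := by
    intro t
    obtain ⟨V, hVS, hVne, hVag⟩ := hL (m + t)
    refine ⟨V, hVS, ?_, hVag⟩
    rcases lexLt_total hVne with h | h
    · obtain ⟨i, hi, hib⟩ := hcon V hVS h
      exact absurd (hVag i (by omega)) hib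
    · exact h
  let Vt : ℕ → ℕ → Fin b := fun t => (hA t).choose
  have hVt : ∀ t, Vt t ∈ SS W ∧ lexLt L (Vt t) ∧ ∀ i < m + t, Vt t i = L i :=
    fun t => (hA t).choose_spec
  let wit : ℕ → ℕ := fun t => (hVt t).2.1.choose
  have hwit : ∀ t, L (wit t) < Vt t (wit t) ∧ ∀ j < wit t, L j = Vt t j :=
    fun t => (hVt t).2.1.choose_spec
  let M : ℕ → ℕ := fun t => Nat.rec 0 (fun _ cur => wit cur + 1) t
  have hM : ∀ t, M (t+1) = wit (M t) + 1 := fun t => rfl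
  refine no_descend hwf (fun t => Vt (M t)) (fun t => (hVt (M t)).1) ?_
  intro t
  refine ⟨wit (M t), ?_, ?_⟩
  · show Vt (M (t+1)) (wit (M t)) < Vt (M t) (wit (M t))
    have h1 := (hwit (M t)).1
    have h2 : Vt (M (t+1)) (wit (M t)) = L (wit (M t)) :=
      (hVt (M (t+1))).2.2 _ (by rw [hM]; omega)
    rw [h2]
    exact h1
  · intro j hj
    show Vt (M (t+1)) j = Vt (M t) j
    have h1 : Vt (M (t+1)) j = L j := (hVt (M (t+1))).2.2 _ (by rw [hM]; omega)
    have h2 := (hwit (M t)).2 j hj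
    rw [h1, ← h2]


theorem exists_inc_limits {W : ℕ → Fin b} (hnp : NotEP W)
    (hwf : (SS W).WellFoundedOn lexLt) :
    ∃ L : ℕ → ℕ → Fin b, (∀ n, IsLimitWord (SS W) (L n)) ∧ ∀ n, lexLt (L n) (L (n+1)) := by
  have hTinf := part1 hnp
  let e := Set.Infinite.natEmbedding _ hTinf
  let g0 : ℕ → ℕ → Fin b := fun t => (e t).1
  have hg0lim : ∀ t, IsLimitWord (SS W) (g0 t) := fun t => (e t).2
  have hg0inj : Function.Injective g0 := fun t t' h => e.injective (Subtype.ext h)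
  obtain ⟨φ, hφ⟩ := exists_increasing_or_nonincreasing_subseq' lexLt g0
  rcases hφ with hinc | hnon
  · exact ⟨fun n => g0 (φ n), fun n => hg0lim (φ n), fun n => hinc n⟩
  · exfalso
    set h : ℕ → ℕ → Fin b := fun t => g0 (φ t) with hh
    have hdesc : ∀ t, lexLt (h (t+1)) (h t) := by
      intro t
      have hne : h t ≠ h (t+1) := fun he => by
        have := hg0inj he
        have := φ.injective this
        omega
      rcases lexLt_total hne with hc | hc
      · exact absurd hc (hnon t (t+1) (by omega))
      · exact hc
    have hd := fun t => (hdesc t).choose_spec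
    set d : ℕ → ℕ := fun t => (hdesc t).choose with hdd
    have hVs := fun t => (approx_below hwf (hg0lim (φ t)) (d t + 1)).choose_spec
    set Vs : ℕ → ℕ → Fin b := fun t => (approx_below hwf (hg0lim (φ t)) (d t + 1)).choose
      with hVsd
    have hmid : ∀ t, lexLt (h (t+1)) (Vs t) := by
      intro t
      refine ⟨d t, ?_, ?_⟩
      · have h1 := (hd t).1
        have h2 : Vs t (d t) = h t (d t) := (hVs t).2.2 _ (by omega)
        rw [h2]
        exact h1
      · intro j hj
        have h1 := (hd t).2 j hj
        have h2 : Vs t j = h t j := (hVs t).2.2 _ (by omega)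
        rw [h1, h2]
    refine no_descend hwf Vs (fun t => (hVs t).1) ?_
    intro t
    exact lexLt_trans (hVs (t+1)).2.1 (hmid t)

theorem part2 {W : ℕ → Fin b} (hnp : NotEP W) (hwf : (SS W).WellFoundedOn lexLt) :
    ∃ f : ℕ → ℕ → ℕ → Fin b, (∀ n m, f n m ∈ SS W) ∧
      ∀ n m n' m', (n < n' ∨ (n = n' ∧ m < m')) → lexLt (f n m) (f n' m') := by
  obtain ⟨L, hLlim, hLinc⟩ := exists_inc_limits hnp hwf
  have hd := fun n => (hLinc n).choose_spec
  set d : ℕ → ℕ := fun n => (hLinc n).choose with hdd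
  have hap : ∀ n m : ℕ, ∃ V, V ∈ SS W ∧ lexLt V (L (n+1)) ∧ ∀ i < m, V i = L (n+1) i :=
    fun n m => approx_below hwf (hLlim (n+1)) m
  choose A hA1 hA2 hA3 using hap
  have hA2' : ∀ n q : ℕ, ∃ i, A n q i < L (n+1) i ∧ ∀ j < i, A n q j = L (n+1) j :=
    fun n q => hA2 n q
  choose wit hw1 hw2 using hA2'
  set B : ℕ → ℕ → ℕ := fun n m =>
    Nat.rec (d n + 1) (fun _ cur => max (d n + 1) (wit n cur + 1)) m with hB
  have hBsucc : ∀ n m, B n (m+1) = max (d n + 1) (wit n (B n m) + 1) := fun n m => rfl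
  have hB0 : ∀ n m, d n + 1 ≤ B n m := by
    intro n m
    induction m with
    | zero => exact le_refl _
    | succ m ih => rw [hBsucc]; exact le_max_left _ _
  set f : ℕ → ℕ → ℕ → Fin b := fun n m => A n (B n m) with hf
  -- column adjacent increase
  have hcoladj : ∀ n m, lexLt (f n m) (f n (m+1)) := by
    intro n m
    refine ⟨wit n (B n m), ?_, ?_⟩
    · have h1 := hw1 n (B n m)
      have h2 : f n (m+1) (wit n (B n m)) = L (n+1) (wit n (B n m)) := by
        refine hA3 n (B n (m+1)) _ ?_
        rw [hBsucc]
        omega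
      rw [h2]
      exact h1
    · intro j hj
      have h1 := hw2 n (B n m) j hj
      have h2 : A n (B n (m+1)) j = L (n+1) j := by
        refine hA3 n (B n (m+1)) _ ?_
        rw [hBsucc]
        omega
      show A n (B n m) j = A n (B n (m+1)) j
      rw [h1, h2]
  have hcol : ∀ n m m', m < m' → lexLt (f n m) (f n m') := by
    have key : ∀ n m t, lexLt (f n m) (f n (m + t + 1)) := by
      intro n m t
      induction t with
      | zero => exact hcoladj n m
      | succ t ih => exact lexLt_trans ih (hcoladj n (m + t + 1))
    intro n m m' hmm
    have : m' = m + (m' - m - 1) + 1 := by omega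
    rw [this]
    exact key n m _
  have hhigh : ∀ n m, lexLt (f n m) (L (n+1)) := fun n m => hA2 n (B n m)
  have hlow : ∀ n m, lexLt (L n) (f n m) := by
    intro n m
    refine ⟨d n, ?_, ?_⟩
    · have h1 := (hd n).1
      have h2 : f n m (d n) = L (n+1) (d n) := hA3 n (B n m) _ (by have := hB0 n m; omega)
      rw [h2]
      exact h1
    · intro j hj
      have h1 := (hd n).2 j hj
      have h2 : f n m j = L (n+1) j := hA3 n (B n m) _ (by have := hB0 n m; omega)
      rw [h1, h2]
  have hLchain : ∀ n t : ℕ, lexLt (L n) (L (n + t + 1)) := by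
    intro n t
    induction t with
    | zero => exact hLinc n
    | succ t ih => exact lexLt_trans ih (hLinc (n + t + 1))
  refine ⟨f, fun n m => hA1 n (B n m), ?_⟩
  rintro n m n' m' (hlt | ⟨rfl, hlt⟩)
  · rcases Nat.eq_or_lt_of_le (Nat.succ_le_of_lt hlt) with he | hgt
    · subst he
      exact lexLt_trans (hhigh n m) (hlow (n+1) m')
    · have : n' = (n + 1) + (n' - n - 2) + 1 := by omega
      refine lexLt_trans (hhigh n m) (lexLt_trans ?_ (hlow n' m'))
      rw [this]
      exact hLchain (n+1) _
  · exact hcol n m m' hlt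

end Stmt16

/-- If `W` is not eventually periodic, the set of shifts of `W` has infinitely many
limit points; consequently, if the set of shifts is well-ordered by the lexicographic
order, its order type is at least `ω²` (there is an order embedding of `ℕ ×ₗ ℕ`). -/
theorem stmt_16 (b : ℕ) (hb : 2 ≤ b) (W : ℕ → Fin b)
    (hnp : ¬∃ N p : ℕ, 0 < p ∧ ∀ k, N ≤ k → W (k + p) = W k) :
    {L | IsLimitWord {V | ∃ k : ℕ, V = shiftW k W} L}.Infinite ∧
    (({V | ∃ k : ℕ, V = shiftW k W} : Set (ℕ → Fin b)).WellFoundedOn lexLt →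
      ∃ f : ℕ → ℕ → ℕ → Fin b,
        (∀ n m, f n m ∈ {V | ∃ k : ℕ, V = shiftW k W}) ∧
        ∀ n m n' m', (n < n' ∨ (n = n' ∧ m < m')) → lexLt (f n m) (f n' m')) :=
  ⟨Stmt16.part1 hnp, fun hwf => Stmt16.part2 hnp hwf⟩
end

section
/- Let D be the word morphism on infinite binary words defined on letters by D(d) = 0 1^{d+1} (for letters d over any alphabet {0,...,b−1}), extended letter-by-letter to infinite words. If W is an infinite word over {0,...,b−1} such that the set of shifts of W is well-ordered in the lexicographic order, then the set of shifts of D(W) is also well-ordered in the lexicographic order, and the order type of the shifts of W is ≤ the order type of the shifts of D(W). -/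
open Classical in
/-- The image of `W` under the letter-by-letter morphism `d ↦ 0 1^{d+1}`:
position `n` of `D(W)` is `0` exactly when `n` is the start of a block. -/
noncomputable def Dmorph {b : ℕ} (W : ℕ → Fin b) : ℕ → Fin 2 := fun n =>
  if ∃ k : ℕ, n = ∑ j ∈ Finset.range k, ((W j : ℕ) + 2) then 0 else 1

namespace Stmt17Aux

variable {b : ℕ} (W : ℕ → Fin b)

/-- Block starts. -/
def S (k : ℕ) : ℕ := ∑ j ∈ Finset.range k, ((W j : ℕ) + 2)

/-- Tail partial sums. -/
def TS (k q : ℕ) : ℕ := ∑ j ∈ Finset.range q, ((W (k + j) : ℕ) + 2)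

lemma S_add (k q : ℕ) : S W (k + q) = S W k + TS W k q :=
  Finset.sum_range_add _ k q

lemma S_strictMono : StrictMono (S W) :=
  strictMono_nat_of_lt_succ (by
    intro n
    simp only [S, Finset.sum_range_succ]
    omega)

lemma self_le_S (k : ℕ) : k ≤ S W k := by
  induction k with
  | zero => simp [S]
  | succ n ih => simp only [S, Finset.sum_range_succ] at *; omega

lemma TS_succ (k q : ℕ) : TS W k (q + 1) = TS W k q + ((W (k + q) : ℕ) + 2) := by
  simp [TS, Finset.sum_range_succ]

lemma TS_strictMono (k : ℕ) : StrictMono (TS W k) :=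
  strictMono_nat_of_lt_succ (by
    intro n
    simp only [TS, Finset.sum_range_succ]
    omega)

lemma TS_congr {k l i : ℕ} (h : ∀ j < i, W (k + j) = W (l + j)) {q : ℕ} (hq : q ≤ i) :
    TS W k q = TS W l q := by
  unfold TS
  refine Finset.sum_congr rfl fun j hj => ?_
  rw [h j (lt_of_lt_of_le (Finset.mem_range.mp hj) hq)]

lemma Dmorph_eq_zero_iff (n : ℕ) : Dmorph W n = 0 ↔ ∃ k, n = S W k := by
  unfold Dmorph S
  split
  · simpa
  · simp_all

lemma aligned_zero_iff (m n : ℕ) :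
    shiftW (S W m) (Dmorph W) n = 0 ↔ ∃ q, n = TS W m q := by
  show Dmorph W (n + S W m) = 0 ↔ _
  rw [Dmorph_eq_zero_iff]
  constructor
  · rintro ⟨k, hk⟩
    have hmk : m ≤ k := by
      by_contra h
      have := S_strictMono W (show k < m by omega)
      omega
    refine ⟨k - m, ?_⟩
    have := S_add W m (k - m)
    rw [show m + (k - m) = k by omega] at this
    omega
  · rintro ⟨q, hq⟩
    exact ⟨m + q, by rw [S_add]; omega⟩

lemma fin2_cases (x y : Fin 2) (h : x = 0 ↔ y = 0) : x = y := by
  revert h; revert x y; decide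

lemma fin2_lt (x y : Fin 2) (h : x < y) : x = 0 ∧ y = 1 := by
  revert h; revert x y; decide

/-- Main comparison lemma for aligned shifts. -/
lemma comp {k l : ℕ} (h : lexLt (shiftW k W) (shiftW l W)) :
    lexLt (shiftW (S W k) (Dmorph W)) (shiftW (S W l) (Dmorph W)) := by
  obtain ⟨i, h1, h2⟩ := h
  have h1' : (W (k + i) : ℕ) < (W (l + i) : ℕ) := by
    simpa [shiftW, Nat.add_comm] using h1
  have h2' : ∀ j < i, W (k + j) = W (l + j) := by
    intro j hj; have := h2 j hj; simpa [shiftW, Nat.add_comm] using this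
  set c := TS W k i with hc
  have hcl : TS W l i = c := (TS_congr W h2' le_rfl).symm
  set d := (W (k + i) : ℕ) with hd
  refine ⟨c + d + 2, ?_, ?_⟩
  · -- strict inequality at position c + d + 2
    have hA : shiftW (S W k) (Dmorph W) (c + d + 2) = 0 := by
      rw [aligned_zero_iff]
      exact ⟨i + 1, by rw [TS_succ, ← hc, ← hd]; ring⟩
    have hB : shiftW (S W l) (Dmorph W) (c + d + 2) = 1 := by
      have : ¬ shiftW (S W l) (Dmorph W) (c + d + 2) = 0 := by
        rw [aligned_zero_iff]
        rintro ⟨q, hq⟩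
        rcases le_or_gt q i with hqi | hqi
        · have := (TS_strictMono W l).monotone hqi
          omega
        · have h3 : TS W l (i + 1) ≤ TS W l q := (TS_strictMono W l).monotone hqi
          have h4 := TS_succ W l i
          omega
      omega
    rw [hA, hB]; decide
  · -- agreement before position c + d + 2
    intro n hn
    apply fin2_cases
    rw [aligned_zero_iff, aligned_zero_iff]
    have key : ∀ q, n = TS W k q → q ≤ i := by
      intro q hq
      by_contra hqi
      have h3 : TS W k (i + 1) ≤ TS W k q := (TS_strictMono W k).monotone (by omega)
      have h4 : TS W k (i + 1) = c + (d + 2) := by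
        rw [TS_succ, ← hc, ← hd]
      omega
    have key' : ∀ q, n = TS W l q → q ≤ i := by
      intro q hq
      by_contra hqi
      have h3 : TS W l (i + 1) ≤ TS W l q := (TS_strictMono W l).monotone (by omega)
      have h4 : TS W l (i + 1) = c + ((W (l + i) : ℕ) + 2) := by
        rw [TS_succ, hcl]
      omega
    constructor
    · rintro ⟨q, hq⟩
      exact ⟨q, by rw [hq, TS_congr W h2' (key q hq)]⟩
    · rintro ⟨q, hq⟩
      exact ⟨q, by rw [hq, ← TS_congr W h2' (key' q hq)]⟩

lemma aligned_congr {k l : ℕ} (h : shiftW k W = shiftW l W) :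
    shiftW (S W k) (Dmorph W) = shiftW (S W l) (Dmorph W) := by
  have h' : ∀ j, W (k + j) = W (l + j) := by
    intro j
    have := congrFun h j
    simpa [shiftW, Nat.add_comm] using this
  funext n
  apply fin2_cases
  rw [aligned_zero_iff, aligned_zero_iff]
  have : ∀ q, TS W k q = TS W l q := fun q =>
    TS_congr W (i := q + 1) (fun j _ => h' j) (by omega)
  constructor <;> rintro ⟨q, hq⟩ <;> exact ⟨q, by rw [hq, this q]⟩

lemma lexLt_irrefl (U : ℕ → Fin b) : ¬ lexLt U U := by
  rintro ⟨i, h1, _⟩; exact lt_irrefl _ h1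

lemma lexLt_asymm {U V : ℕ → Fin b} (h : lexLt U V) : ¬ lexLt V U := by
  obtain ⟨i, h1, h2⟩ := h
  rintro ⟨i', h1', h2'⟩
  rcases lt_trichotomy i i' with hii | hii | hii
  · rw [h2' i hii] at h1; exact lt_irrefl _ h1
  · subst hii; exact absurd h1' (not_lt_of_gt h1)
  · rw [h2 i' hii] at h1'; exact lt_irrefl _ h1'

lemma lexLt_trichotomy (U V : ℕ → Fin b) : U = V ∨ lexLt U V ∨ lexLt V U := by
  by_cases h : ∃ n, U n ≠ V n
  · right
    classical
    have hfind := Nat.find_spec h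
    have hmin : ∀ j < Nat.find h, U j = V j := fun j hj => by
      have := Nat.find_min h hj; tauto
    rcases lt_or_gt_of_ne hfind with hlt | hgt
    · exact Or.inl ⟨Nat.find h, hlt, hmin⟩
    · exact Or.inr ⟨Nat.find h, hgt, fun j hj => (hmin j hj).symm⟩
  · left
    push_neg at h
    exact funext h

/-- Shape lemma: existence of block decomposition of an arbitrary shift position. -/
lemma exists_block (p : ℕ) : ∃ m, p ≤ S W m := ⟨p, self_le_S W p⟩

open Classical in
noncomputable def blk (p : ℕ) : ℕ := Nat.find (exists_block W p)

lemma blk_spec (p : ℕ) : p ≤ S W (blk W p) := Nat.find_spec (exists_block W p)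

lemma blk_min (p : ℕ) {m : ℕ} (h : m < blk W p) : S W m < p := by
  have := Nat.find_min (exists_block W p) h
  omega

lemma shape (p n : ℕ) :
    shiftW p (Dmorph W) n =
      if n < S W (blk W p) - p then 1
      else shiftW (S W (blk W p)) (Dmorph W) (n - (S W (blk W p) - p)) := by
  set m := blk W p
  set t := S W m - p with ht
  have hpm : p ≤ S W m := blk_spec W p
  split
  · rename_i hn
    show Dmorph W (n + p) = 1
    have : ¬ Dmorph W (n + p) = 0 := by
      rw [Dmorph_eq_zero_iff]
      rintro ⟨k, hk⟩
      rcases lt_or_ge k m with hkm | hkm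
      · have := blk_min W p hkm; omega
      · have := (S_strictMono W).monotone hkm; omega
    have h2 := (Dmorph W (n + p)).isLt
    omega
  · rename_i hn
    show Dmorph W (n + p) = Dmorph W (n - t + S W m)
    congr 1
    omega

end Stmt17Aux

open Stmt17Aux in
/-- If the shifts of `W` are well-ordered lexicographically, then so are the shifts of
`D(W)`, and the order type of the shifts of `W` is at most that of the shifts of
`D(W)` (witnessed by a strictly order-preserving map of shifts). -/
theorem stmt_17 (b : ℕ) (hb : 2 ≤ b) (W : ℕ → Fin b)
    (hWF : ({V | ∃ k : ℕ, V = shiftW k W} : Set (ℕ → Fin b)).WellFoundedOn lexLt) :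
    ({V | ∃ k : ℕ, V = shiftW k (Dmorph W)} : Set (ℕ → Fin 2)).WellFoundedOn lexLt ∧
    ∃ f : ℕ → ℕ, ∀ k l : ℕ, lexLt (shiftW k W) (shiftW l W) →
      lexLt (shiftW (f k) (Dmorph W)) (shiftW (f l) (Dmorph W)) := by
  classical
  constructor
  · -- well-foundedness
    rw [Set.wellFoundedOn_iff] at hWF ⊢
    set rW : (ℕ → Fin b) → (ℕ → Fin b) → Prop :=
      fun a c => lexLt a c ∧ (∃ k, a = shiftW k W) ∧ (∃ k, c = shiftW k W) with hrW
    have hwfP : WellFounded (Prod.Lex (· < · : ℕ → ℕ → Prop) rW) :=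
      WellFounded.prod_lex (Nat.lt_wfRel.wf) hWF
    -- measure
    set μ : (ℕ → Fin 2) → ℕ × (ℕ → Fin b) := fun V =>
      if h : ∃ p, V = shiftW p (Dmorph W) then
        (S W (blk W (Nat.find h)) - Nat.find h, shiftW (blk W (Nat.find h)) W)
      else (0, W) with hμ
    refine Subrelation.wf (r := InvImage (Prod.Lex (· < ·) rW) μ) ?_ (InvImage.wf μ hwfP)
    rintro a c ⟨hac, ha, hc⟩
    simp only [Set.mem_setOf_eq] at ha hc
    -- unfold μ
    unfold InvImage
    rw [hμ]
    simp only [dif_pos ha, dif_pos hc]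
    set p := Nat.find ha with hp
    set p' := Nat.find hc with hp'
    have hap : a = shiftW p (Dmorph W) := Nat.find_spec ha
    have hcp : c = shiftW p' (Dmorph W) := Nat.find_spec hc
    set m := blk W p
    set m' := blk W p'
    set t := S W m - p with htdef
    set t' := S W m' - p' with ht'def
    -- block decompositions
    have hsa : ∀ n, a n = if n < t then 1 else shiftW (S W m) (Dmorph W) (n - t) := by
      intro n; rw [hap]; exact shape W p n
    have hsc : ∀ n, c n = if n < t' then 1 else shiftW (S W m') (Dmorph W) (n - t') := by
      intro n; rw [hcp]; exact shape W p' n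
    obtain ⟨i, h1, h2⟩ := hac
    obtain ⟨hai, hci⟩ := fin2_lt _ _ h1
    -- a i = 0 forces i ≥ t
    have hit : t ≤ i := by
      by_contra h
      rw [hsa i, if_pos (by omega)] at hai
      exact absurd hai (by decide)
    -- c at position t' is 0
    have hct' : c t' = 0 := by
      rw [hsc t', if_neg (by omega)]
      rw [aligned_zero_iff]
      exact ⟨0, by simp [TS]⟩
    rcases lt_trichotomy t t' with htt | htt | htt
    · exact Prod.Lex.left _ _ htt
    · -- equal offsets: compare aligned tails
      rw [htt]
      refine Prod.Lex.right _ ⟨?_, ⟨m, rfl⟩, ⟨m', rfl⟩⟩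
      -- first: lexLt on aligned D-shifts
      have hDlt : lexLt (shiftW (S W m) (Dmorph W)) (shiftW (S W m') (Dmorph W)) := by
        refine ⟨i - t, ?_, ?_⟩
        · have ha' := hsa i; rw [if_neg (by omega)] at ha'
          have hc' := hsc i; rw [if_neg (by omega)] at hc'
          rw [← ha', htt, ← hc']
          exact h1
        · intro j hj
          have ha' := hsa (j + t); rw [if_neg (by omega)] at ha'
          have hc' := hsc (j + t); rw [if_neg (by omega)] at hc'
          have := h2 (j + t) (by omega)
          rw [ha', hc'] at this
          simpa [← htt, Nat.add_sub_cancel] using this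
      -- deduce lexLt on W-shifts by trichotomy
      rcases lexLt_trichotomy (shiftW m W) (shiftW m' W) with heq | hlt | hgt
      · exact absurd hDlt (by rw [aligned_congr W heq]; exact lexLt_irrefl _)
      · exact hlt
      · exact absurd hDlt (lexLt_asymm (comp W hgt))
    · -- t > t' impossible
      exfalso
      rcases lt_trichotomy i t' with hit' | hit' | hit'
      · -- i < t' < t but i ≥ t
        omega
      · rw [hit'] at hci; rw [hct'] at hci; exact absurd hci (by decide)
      · -- t' < i : a t' = c t' by h2, but a t' = 1 (since t' < t), c t' = 0
        have := h2 t' hit'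
        rw [hct'] at this
        rw [hsa t', if_pos (by omega)] at this
        exact absurd this (by decide)
  · -- the order-preserving map
    exact ⟨S W, fun k l h => comp W h⟩
end

section
/- Fix an integer b ≥ 2 and let B = {b^i : i ∈ ℕ}. There is no real number x such that x∗B = {x·b^i mod 1 : i ∈ ℕ} is well-ordered by the usual order on ℝ with order type α satisfying ω ≤ α < ω². -/
/-!
Let `S = x∗B`; if `S` is infinite, `x` is irrational. Let `L` be the set of points approached by
`S` strictly from the left. If `L` is infinite, it contains an increasing sequence, and `S` has
infinitely many points between consecutive terms, which embeds `ω²` into `S`. If `L` is finite,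
every `p ∈ L` is rational: the left limits of `bⁱp` mod 1 lie in `L` again, so two of them
coincide. With a common denominator `Q` of `L`, all but finitely many points `x bⁱ` mod 1 lie
within `1/(2bQ)` of `L`, so the distance from `Q x bⁱ` to the nearest integer is eventually
multiplied by `b` at each step; being positive, it cannot stay below `1/(2b)`.
-/

open Set Filter Function

section LeftAccPts

variable {α : Type*} [LinearOrder α]

def leftAccPts (S : Set α) : Set α := {p | ∀ c < p, (S ∩ Ioo c p).Nonempty}

theorem Set.IsWF.exists_strictMono_of_infinite {s : Set α} (hs : s.IsWF) (hinf : s.Infinite) :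
    ∃ f : ℕ → α, StrictMono f ∧ ∀ n, f n ∈ s := by
  set e := hinf.natEmbedding s
  obtain ⟨g, hg⟩ := hs.isPWO.exists_monotone_subseq fun n => (e n).2
  exact ⟨_, hg.strictMono_of_injective
    ((Subtype.val_injective.comp e.injective).comp g.injective), fun n => (e (g n)).2⟩

theorem inter_Ioo_infinite_of_mem_leftAccPts {S : Set α} {p c : α} (hp : p ∈ leftAccPts S)
    (hc : c < p) : (S ∩ Ioo c p).Infinite := by
  intro hfin
  obtain ⟨m, hm, hmax⟩ := exists_max_image _ id hfin (hp c hc)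
  obtain ⟨y, hyS, hmy, hyp⟩ := hp m hm.2.2
  exact (hmax y ⟨hyS, hm.2.1.trans hmy, hyp⟩).not_gt hmy

theorem Set.IsWF.leftAccPts {S : Set α} (hS : S.IsWF) : (leftAccPts S).IsWF := by
  rw [Set.isWF_iff_no_descending_seq] at hS ⊢
  intro f hf hfL
  choose t ht using fun n => hfL n (f (n + 1)) (hf n.lt_succ_self)
  exact hS t (strictAnti_nat_of_succ_lt fun n => (ht (n + 1)).2.2.trans (ht n).2.1)
    fun n => (ht n).1

end LeftAccPts

theorem ciSup_mem_leftAccPts {α : Type*} [ConditionallyCompleteLinearOrder α] [TopologicalSpace α]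
    [OrderTopology α] {S : Set α} {g : ℕ → α} (hg : StrictMono g) (hbdd : BddAbove (range g))
    (hgS : ∀ n, g n ∈ S) : ⨆ n, g n ∈ leftAccPts S := by
  intro c hc
  obtain ⟨n, hn⟩ := ((tendsto_atTop_ciSup hg.monotone hbdd).eventually (lt_mem_nhds hc)).exists
  exact ⟨g n, hgS n, hn, (hg n.lt_succ_self).trans_le (le_ciSup hbdd _)⟩

theorem finite_setOf_forall_le_abs_sub_leftAccPts {S : Set ℝ} (hS : S.IsWF) (hbdd : BddAbove S)
    {δ : ℝ} (hδ : 0 < δ) : {y ∈ S | ∀ p ∈ leftAccPts S, δ ≤ |y - p|}.Finite := by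
  by_contra hinf
  obtain ⟨g, hg, hgT⟩ := (hS.mono (sep_subset _ _)).exists_strictMono_of_infinite hinf
  have hbdd' : BddAbove (range g) := hbdd.mono (range_subset_iff.2 fun n => (hgT n).1)
  obtain ⟨n, hn⟩ :=
    ((tendsto_atTop_ciSup hg.monotone hbdd').eventually (Metric.ball_mem_nhds _ hδ)).exists
  rw [Real.dist_eq] at hn
  exact ((hgT n).2 _ (ciSup_mem_leftAccPts hg hbdd' fun n => (hgT n).1)).not_gt hn

section OrderType

open Ordinal

theorem orderType_lt_omega0_of_finite {s : Set ℝ} (h : s.IsWF) (hfin : s.Finite) :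
    orderType s h < ω := by
  have : WellFoundedLT s := ⟨h⟩
  have := hfin.fintype
  rw [orderType, type_fintype]
  exact natCast_lt_omega0 _

theorem omega0_sq_le_orderType {s : Set ℝ} (h : s.IsWF) {f : ℕ ×ₗ ℕ → ℝ} (hf : StrictMono f)
    (hfs : ∀ q, f q ∈ s) : ω ^ 2 ≤ orderType s h := by
  have : WellFoundedLT s := ⟨h⟩
  rw [orderType, pow_two, ← type_nat_lt, ← type_prod_lex]
  exact (RelEmbedding.ofMonotone (r := Prod.Lex (· < ·) (· < ·)) (s := (· < ·))
    (fun q : ℕ × ℕ => (⟨f (toLex q), hfs _⟩ : s)) fun _ _ hab => hf hab).ordinal_type_le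

theorem omega0_sq_le_orderType_of_infinite_leftAccPts {S : Set ℝ} (hS : S.IsWF)
    (hL : (leftAccPts S).Infinite) : ω ^ 2 ≤ orderType S hS := by
  obtain ⟨f, hf, hfL⟩ := hS.leftAccPts.exists_strictMono_of_infinite hL
  choose g hg hgS using fun n => (hS.mono inter_subset_left).exists_strictMono_of_infinite
    (inter_Ioo_infinite_of_mem_leftAccPts (hfL (n + 1)) (hf n.lt_succ_self))
  refine omega0_sq_le_orderType hS (f := fun q => g (ofLex q).1 (ofLex q).2) ?_
    fun q => (hgS _ _).1
  rintro ⟨n, k⟩ ⟨n', k'⟩ hlt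
  rcases Prod.Lex.lt_iff.1 hlt with h | ⟨rfl, h⟩
  · calc g n k < f (n + 1) := (hgS n k).2.2
      _ ≤ f n' := hf.monotone h
      _ < g n' k' := (hgS n' k').2.1
  · exact hg n h

end OrderType

theorem abs_natCast_mul_sub_round {K : Type*} [Field K] [LinearOrder K] [IsStrictOrderedRing K]
    [FloorRing K] {n : ℕ} {t : K} (h : n * |t - round t| < 1 / 2) :
    |n * t - round (n * t)| = n * |t - round t| := by
  have hsmall : |n * t - n * round t| < 1 / 2 := by
    rwa [← mul_sub, abs_mul, Nat.abs_cast]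
  have hround : round (n * t) = n * round t := by
    obtain ⟨h₁, h₂⟩ := abs_lt.1 hsmall
    have hzero : round (n * t - n * round t) = 0 := round_eq_zero_iff.2 ⟨by linarith, by linarith⟩
    rw [show (n : K) * round t = ((n * round t : ℤ) : K) by push_cast; rfl, round_sub_intCast,
      sub_eq_zero] at hzero
    exact hzero
  rw [hround, Int.cast_mul, Int.cast_natCast, ← mul_sub, abs_mul, Nat.abs_cast]

theorem Irrational.not_eventually_mul_abs_sub_round_lt {y : ℝ} (hy : Irrational y) {b : ℕ}
    (hb : 1 < b) : ¬∀ᶠ i in atTop, (b : ℝ) * |y * b ^ i - round (y * b ^ i)| < 1 / 2 := by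
  intro h
  obtain ⟨N, hN⟩ := eventually_atTop.1 h
  set e : ℕ → ℝ := fun i => |y * b ^ i - round (y * b ^ i)| with he
  have hstep : ∀ i ≥ N, e (i + 1) = b * e i := fun i hi => by
    simp only [he]
    rw [pow_succ, ← mul_assoc, mul_comm _ (b : ℝ)]
    exact abs_natCast_mul_sub_round (hN i hi)
  have hgrow : ∀ j, e (N + j) = b ^ j * e N := by
    intro j
    induction j with
    | zero => simp
    | succ j ih => rw [← add_assoc, hstep _ (N.le_add_right j), ih, pow_succ']; ring
  have hpos : 0 < e N := by
    refine abs_pos.2 (sub_ne_zero.2 ?_)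
    exact_mod_cast (hy.mul_natCast (pow_ne_zero N (by omega : b ≠ 0))).ne_int _
  obtain ⟨j, hj⟩ := pow_unbounded_of_one_lt (1 / e N) (by exact_mod_cast hb : (1 : ℝ) < b)
  have hle : e (N + j) ≤ 1 / 2 := abs_sub_round _
  rw [div_lt_iff₀ hpos] at hj
  linarith [hgrow j]

/-- `a * p - ⌈a * p⌉ + 1` is `a * p` reduced mod 1 into `(0, 1]`: the limit of `fract (a * y)` as
`y → p⁻`. -/
theorem mul_sub_ceil_add_one_mem_leftAccPts {S : Set ℝ} {a p : ℝ} (ha : 0 < a)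
    (hS : ∀ y ∈ S, Int.fract (a * y) ∈ S) (hp : p ∈ leftAccPts S) :
    a * p - ⌈a * p⌉ + 1 ∈ leftAccPts S := by
  set m : ℤ := ⌈a * p⌉ - 1
  have hm : (m : ℝ) < a * p ∧ a * p ≤ m + 1 := by
    simp only [m, Int.cast_sub, Int.cast_one, sub_add_cancel]
    exact ⟨by linarith [Int.ceil_lt_add_one (a * p)], Int.le_ceil _⟩
  rw [show a * p - ⌈a * p⌉ + 1 = a * p - m by push_cast [m]; ring]
  intro c hc
  obtain ⟨y, hyS, hcy, hyp⟩ := hp (max ((c + m) / a) (m / a))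
    (max_lt ((div_lt_iff₀ ha).2 (by linarith)) ((div_lt_iff₀ ha).2 (by linarith)))
  rw [max_lt_iff, div_lt_iff₀' ha, div_lt_iff₀' ha] at hcy
  have hyp' : a * y < a * p := mul_lt_mul_of_pos_left hyp ha
  have hfloor : ⌊a * y⌋ = m := Int.floor_eq_iff.2 ⟨hcy.2.le, by linarith⟩
  refine ⟨Int.fract (a * y), hS y hyS, ?_, ?_⟩ <;> rw [Int.fract, hfloor] <;> linarith

def fractOrbit (x : ℝ) (b : ℕ) : Set ℝ := (fun i : ℕ => Int.fract (x * (b : ℝ) ^ i)) '' univ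

section FractOrbit

variable {x : ℝ} {b : ℕ}

theorem bddAbove_fractOrbit : BddAbove (fractOrbit x b) :=
  ⟨1, by rintro _ ⟨i, -, rfl⟩; exact (Int.fract_lt_one _).le⟩

theorem fract_pow_mul_mem_fractOrbit {y : ℝ} (hy : y ∈ fractOrbit x b) (i : ℕ) :
    Int.fract ((b : ℝ) ^ i * y) ∈ fractOrbit x b := by
  obtain ⟨k, -, rfl⟩ := hy
  refine ⟨k + i, trivial, Int.fract_eq_fract.2 ⟨(b : ℤ) ^ i * ⌊x * (b : ℝ) ^ k⌋, ?_⟩⟩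
  beta_reduce
  rw [← Int.self_sub_floor]
  push_cast
  ring

theorem finite_fractOrbit_of_not_irrational (hx : ¬Irrational x) : (fractOrbit x b).Finite := by
  obtain ⟨q, rfl⟩ := exists_rat_of_not_irrational hx
  refine ((finite_Ico (0 : ℤ) q.den).image fun k : ℤ => (k : ℝ) / q.den).subset ?_
  rintro _ ⟨i, -, rfl⟩
  have hd : (0 : ℤ) < q.den := by exact_mod_cast q.pos
  refine ⟨q.num * b ^ i % q.den, ⟨Int.emod_nonneg _ hd.ne', Int.emod_lt_of_pos _ hd⟩, ?_⟩
  change ((q.num * b ^ i % q.den : ℤ) : ℝ) / q.den = Int.fract ((q : ℝ) * b ^ i)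
  rw [← Int.fract_div_intCast_eq_div_intCast_mod, Rat.cast_def]
  push_cast
  ring_nf

theorem Irrational.injective_fract_mul_pow (hx : Irrational x) (hb : 2 ≤ b) :
    Injective fun i : ℕ => Int.fract (x * (b : ℝ) ^ i) := by
  intro i j hij
  obtain ⟨z, hz⟩ := Int.fract_eq_fract.1 hij
  by_contra hne
  have hpow : (b : ℤ) ^ i - (b : ℤ) ^ j ≠ 0 :=
    sub_ne_zero.2 (by exact_mod_cast (Nat.pow_right_injective hb).ne hne)
  exact (hx.mul_intCast hpow).ne_int z (by push_cast; linear_combination hz)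

theorem not_irrational_of_mem_leftAccPts_fractOrbit (hb : 2 ≤ b)
    (hL : (leftAccPts (fractOrbit x b)).Finite) {p : ℝ} (hp : p ∈ leftAccPts (fractOrbit x b)) :
    ¬Irrational p := by
  intro hirr
  have hmem : ∀ i : ℕ, (b : ℝ) ^ i * p - ⌈(b : ℝ) ^ i * p⌉ + 1 ∈ leftAccPts (fractOrbit x b) :=
    fun i => mul_sub_ceil_add_one_mem_leftAccPts (by positivity)
      (fun _ hy => fract_pow_mul_mem_fractOrbit hy i) hp
  have hinj : Injective fun i : ℕ => (b : ℝ) ^ i * p - ⌈(b : ℝ) ^ i * p⌉ + 1 :=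
    fun i j hij => hirr.injective_fract_mul_pow hb <| Int.fract_eq_fract.2
      ⟨⌈(b : ℝ) ^ i * p⌉ - ⌈(b : ℝ) ^ j * p⌉, by push_cast; linarith [hij]⟩
  exact hL.not_infinite (infinite_of_injective_forall_mem hinj hmem)

theorem Irrational.eventually_exists_abs_fract_mul_pow_sub_lt (hx : Irrational x) (hb : 2 ≤ b)
    (hWF : (fractOrbit x b).IsWF) {δ : ℝ} (hδ : 0 < δ) :
    ∀ᶠ i in atTop, ∃ p ∈ leftAccPts (fractOrbit x b), |Int.fract (x * (b : ℝ) ^ i) - p| < δ := by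
  have hfar := ((finite_setOf_forall_le_abs_sub_leftAccPts hWF bddAbove_fractOrbit hδ).preimage
    (hx.injective_fract_mul_pow hb).injOn).eventually_cofinite_notMem
  rw [Nat.cofinite_eq_atTop] at hfar
  filter_upwards [hfar] with i hi
  simp only [mem_preimage, mem_sep_iff, not_and, not_forall, not_le, exists_prop] at hi
  exact hi ⟨i, trivial, rfl⟩

end FractOrbit

theorem Set.Finite.exists_nat_mul_eq_intCast {L : Set ℝ} (hL : L.Finite)
    (h : ∀ p ∈ L, ¬Irrational p) : ∃ Q : ℕ, 0 < Q ∧ ∀ p ∈ L, ∃ k : ℤ, Q * p = k := by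
  choose q hq using fun p : L => exists_rat_of_not_irrational (h p p.2)
  have := hL.fintype
  refine ⟨∏ p : L, (q p).den, Finset.prod_pos fun p _ => (q p).pos, fun p hp => ?_⟩
  obtain ⟨c, hc⟩ := Finset.dvd_prod_of_mem (fun p : L => (q p).den) (Finset.mem_univ ⟨p, hp⟩)
  have hpq : p = q ⟨p, hp⟩ := hq ⟨p, hp⟩
  generalize q ⟨p, hp⟩ = r at hc hpq
  refine ⟨c * r.num, ?_⟩
  rw [hc, hpq]
  push_cast
  rw [← Rat.cast_intCast, ← r.den_mul_eq_num]
  push_cast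
  ring

theorem infinite_leftAccPts_fractOrbit {x : ℝ} {b : ℕ} (hb : 2 ≤ b) (hx : Irrational x)
    (hWF : (fractOrbit x b).IsWF) : (leftAccPts (fractOrbit x b)).Infinite := by
  intro hL
  obtain ⟨Q, hQ, hQL⟩ := hL.exists_nat_mul_eq_intCast fun p hp =>
    not_irrational_of_mem_leftAccPts_fractOrbit hb hL hp
  set δ : ℝ := 1 / (2 * b * Q)
  have hδ : 0 < δ := by positivity
  apply (hx.natCast_mul hQ.ne').not_eventually_mul_abs_sub_round_lt hb
  filter_upwards [hx.eventually_exists_abs_fract_mul_pow_sub_lt hb hWF hδ] with i ⟨p, hp, hi⟩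
  obtain ⟨k, hk⟩ := hQL p hp
  have hshift : Q * x * (b : ℝ) ^ i - ((k + Q * ⌊x * (b : ℝ) ^ i⌋ : ℤ) : ℝ) =
      Q * (Int.fract (x * (b : ℝ) ^ i) - p) := by
    rw [← Int.self_sub_floor]
    push_cast
    linear_combination hk
  calc (b : ℝ) * |Q * x * b ^ i - round (Q * x * b ^ i)|
      ≤ b * |Q * x * (b : ℝ) ^ i - ((k + Q * ⌊x * (b : ℝ) ^ i⌋ : ℤ) : ℝ)| := by
        gcongr ?_ * ?_
        exact round_le _ _
    _ = b * Q * |Int.fract (x * (b : ℝ) ^ i) - p| := by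
        rw [hshift, abs_mul, Nat.abs_cast, mul_assoc]
    _ < b * Q * δ := by gcongr
    _ = 1 / 2 := by
        have : (0 : ℝ) < b * Q := by positivity
        simp only [δ]
        field_simp

/-- For `b ≥ 2` and `B = {bⁱ : i ∈ ℕ}`, there is no real `x` with `x∗B` well-ordered
of order type `α` satisfying `ω ≤ α < ω²`. -/
theorem stmt_18 (b : ℕ) (hb : 2 ≤ b) :
    ¬∃ (x : ℝ) (hWF : ((fun i : ℕ => Int.fract (x * (b : ℝ) ^ i)) '' Set.univ).IsWF),
      Ordinal.omega0 ≤ orderType _ hWF ∧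
        orderType _ hWF < Ordinal.omega0 ^ 2 := by
  rintro ⟨x, hWF, hω, hω2⟩
  have hinf : (fractOrbit x b).Infinite := fun hfin =>
    (orderType_lt_omega0_of_finite hWF hfin).not_ge hω
  have hx : Irrational x := by
    by_contra hx
    exact hinf (finite_fractOrbit_of_not_irrational hx)
  exact hω2.not_ge
    (omega0_sq_le_orderType_of_infinite_leftAccPts hWF (infinite_leftAccPts_fractOrbit hb hx hWF))
end
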